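/- arXiv:2306.01347 — 4 statements merged into one kernel-verified Lean document; each statement's English description precedes it below -/
import Mathlib

section
/- Let E be a measurable space, 1 ≤ k ≤ n, and let (X^j_i)_{1≤i≤n, 1≤j≤k} be mutually independent E-valued random variables. For each tuple i = (i₁,…,i_k) ∈ I_n^k let Φ_i : E^k → ℝ be measurable. Then, with all expectations and logarithms taken in (−∞,+∞], log E[exp(|I_n^k|^{−1} Σ_{i ∈ I_n^k} Φ_i(X^1_{i₁},…,X^k_{i_k}))] ≤ ((n−k+1)/|I_n^k|) Σ_{i ∈ I_n^k} log E[exp((n−k+1)^{−1} Φ_i(X^1_{i₁},…,X^k_{i_k}))]. -/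
open MeasureTheory ProbabilityTheory Filter Classical
open scoped ENNReal NNReal Topology RealInnerProductSpace

noncomputable section

/-- U-statistic of order `k` with kernel `Φ`, applied to a sample `x` of size `n`:
the average of `Φ` over all `k`-tuples of pairwise distinct indices (there are
`n!/(n-k)! = n.descFactorial k` of them, enumerated by embeddings `Fin k ↪ Fin n`). -/
def Ustat {E : Type*} (k n : ℕ) (Φ : (Fin k → E) → ℝ) (x : Fin n → E) : ℝ :=
  (∑ p : Fin k ↪ Fin n, Φ (fun j => x (p j))) / (Nat.descFactorial n k : ℝ)

/-- A kernel of `k` variables is symmetric if it is invariant under permutations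
of its arguments. -/
def SymKernel {E : Type*} (k : ℕ) (Φ : (Fin k → E) → ℝ) : Prop :=
  ∀ (σ : Equiv.Perm (Fin k)) (y : Fin k → E), Φ (y ∘ σ) = Φ y

/-- Relative entropy `H[ν|μ] := ∫ log (dν/dμ) dν` if `ν ≪ μ` (and the integral makes
sense), `+∞` otherwise; valued in `(-∞,+∞]`. -/
def relEnt {E : Type*} [MeasurableSpace E] (ν μ : Measure E) : EReal :=
  if ν ≪ μ ∧ Integrable (fun x => Real.log (ν.rnDeriv μ x).toReal) ν
  then ((∫ x, Real.log (ν.rnDeriv μ x).toReal ∂ν : ℝ) : EReal) else ⊤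

/-- Extended expectation `∫ f dμ`, valued in `[-∞,+∞]`; it coincides with the
expectation taken in `(-∞,+∞]` whenever the negative part of `f` is integrable. -/
def expE {Ω : Type*} [MeasurableSpace Ω] (μ : Measure Ω) (f : Ω → ℝ) : EReal :=
  ((∫⁻ ω, ENNReal.ofReal (f ω) ∂μ : ℝ≥0∞) : EReal) -
    ((∫⁻ ω, ENNReal.ofReal (-f ω) ∂μ : ℝ≥0∞) : EReal)

/-- `log E[exp f]`, valued in `(-∞,+∞]`. -/
def logMGF {Ω : Type*} [MeasurableSpace Ω] (μ : Measure Ω) (f : Ω → ℝ) : EReal :=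
  ENNReal.log (∫⁻ ω, ENNReal.ofReal (Real.exp (f ω)) ∂μ)

/-- The decoupling constants: `C 2 = 8` and `C k = 2^k * ∏_{j=2}^k (j^j - 1)` for `k ≥ 3`. -/
def Cdecoup (k : ℕ) : ℝ :=
  if k = 2 then 8 else 2 ^ k * ∏ j ∈ Finset.Icc 2 k, ((j : ℝ) ^ j - 1)

/-- The empirical probability measure `L_n(x) := n⁻¹ ∑ δ_{x i}` of a sample of positive size. -/
def empProb {E : Type*} [MeasurableSpace E] (n : ℕ) (hn : 0 < n) (x : Fin n → E) :
    ProbabilityMeasure E :=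
  ⟨(n : ℝ≥0∞)⁻¹ • ∑ i : Fin n, Measure.dirac (x i), by
    constructor
    simp only [Measure.smul_apply, Measure.coe_finset_sum, Finset.sum_apply, measure_univ,
      Finset.sum_const, Finset.card_univ, Fintype.card_fin, nsmul_eq_mul, mul_one, smul_eq_mul]
    exact ENNReal.inv_mul_cancel (by exact_mod_cast hn.ne') (by simp)⟩

/-- The free energy `E_W[μ] := H[μ|α] + ∑_{k=2}^N ∫ W^{(k)} dμ^{⊗k}` when `H[μ|α] < ∞` and
`(W^{(k)})⁻ ∈ L¹(μ^{⊗k})` for all `k`, and `+∞` otherwise; valued in `(-∞,+∞]`. -/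
def freeEnergy {E : Type*} [MeasurableSpace E] (α : Measure E) (N : ℕ)
    (W : (k : ℕ) → (Fin k → E) → ℝ) (μ : ProbabilityMeasure E) : EReal :=
  if relEnt (μ : Measure E) α ≠ ⊤ ∧
      ∀ k ∈ Finset.Icc 2 N, Integrable (fun x => min (W k x) 0)
        (Measure.pi fun _ : Fin k => (μ : Measure E))
  then relEnt (μ : Measure E) α
      + ∑ k ∈ Finset.Icc 2 N, expE (Measure.pi fun _ : Fin k => (μ : Measure E)) (W k)
  else ⊤

/-- The `n`-particle mean-field Hamiltonian
`H_n(x) = ∑_i V(x_i) + n ∑_{k=2}^N U_n(W^{(k)})(x)`. -/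
def hamiltonian {E : Type*} (V : E → ℝ) (N : ℕ)
    (W : (k : ℕ) → (Fin k → E) → ℝ) (n : ℕ) (x : Fin n → E) : ℝ :=
  ∑ i, V (x i) + n * ∑ k ∈ Finset.Icc 2 N, Ustat k n (W k) x

/-- The partition function `Z_n = ∫ e^{-H_n} dx`. -/
def gibbsZ (d : ℕ) (V : EuclideanSpace ℝ (Fin d) → ℝ) (N : ℕ)
    (W : (k : ℕ) → (Fin k → EuclideanSpace ℝ (Fin d)) → ℝ) (n : ℕ) : ℝ≥0∞ :=
  ∫⁻ x, ENNReal.ofReal (Real.exp (-(hamiltonian V N W n x)))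
    ∂(Measure.pi fun _ : Fin n => (volume : Measure (EuclideanSpace ℝ (Fin d))))

/-- The Gibbs measure `μ_n(dx) = Z_n⁻¹ e^{-H_n(x)} dx` of the `n`-particle system. -/
def gibbsMeasure (d : ℕ) (V : EuclideanSpace ℝ (Fin d) → ℝ) (N : ℕ)
    (W : (k : ℕ) → (Fin k → EuclideanSpace ℝ (Fin d)) → ℝ) (n : ℕ) :
    Measure (Fin n → EuclideanSpace ℝ (Fin d)) :=
  (gibbsZ d V N W n)⁻¹ •
    (Measure.pi fun _ : Fin n => (volume : Measure (EuclideanSpace ℝ (Fin d)))).withDensity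
      (fun x => ENNReal.ofReal (Real.exp (-(hamiltonian V N W n x))))

/-- The reference Gibbs measure `α(dx) = C⁻¹ e^{-V(x)} dx` with `C = ∫ e^{-V}`. -/
def gibbsAlpha (d : ℕ) (V : EuclideanSpace ℝ (Fin d) → ℝ) :
    Measure (EuclideanSpace ℝ (Fin d)) :=
  (volume : Measure (EuclideanSpace ℝ (Fin d))).withDensity
    (fun x => ENNReal.ofReal ((∫ y, Real.exp (-V y))⁻¹ * Real.exp (-V x)))

/-- The measure `μ*_n(dx) = exp(-n ∑_{k=2}^N U_n(W^{(k)})(x)) α^{⊗n}(dx)`. -/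
def muStar {E : Type*} [MeasurableSpace E] (α : Measure E) (N : ℕ)
    (W : (k : ℕ) → (Fin k → E) → ℝ) (n : ℕ) : Measure (Fin n → E) :=
  (Measure.pi fun _ : Fin n => α).withDensity
    (fun x => ENNReal.ofReal (Real.exp (-(n * ∑ k ∈ Finset.Icc 2 N, Ustat k n (W k) x))))

/-- The partial gradient `∇_{x_i} φ(x)` of a function of `n` variables. -/
def pgrad {F : Type*} [NormedAddCommGroup F] [InnerProductSpace ℝ F] [CompleteSpace F]
    {n : ℕ} (φ : (Fin n → F) → ℝ) (x : Fin n → F) (i : Fin n) : F :=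
  gradient (fun y => φ (Function.update x i y)) (x i)

/-- The Laplacian `Δφ(x) = ∑_i ∂²φ/∂x_i²(x)` on a Euclidean space. -/
def lap {d : ℕ} (φ : EuclideanSpace ℝ (Fin d) → ℝ) (x : EuclideanSpace ℝ (Fin d)) : ℝ :=
  ∑ i, fderiv ℝ (fderiv ℝ φ) x (EuclideanSpace.single i 1) (EuclideanSpace.single i 1)

/-- The mean-field Fisher information `I_W[ν]` of a measure `ν = f·α`, namely
`(1/4) ∫ ‖∇ log f(y) + ∑_{k=2}^N ∑_{j=1}^k ∫ ∇_{x_j} W^{(k)}(x₁,…,y,…,x_k) dν^{⊗(k-1)}‖² dν(y)`. -/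
def fisherW {d : ℕ} (N : ℕ) (W : (k : ℕ) → (Fin k → EuclideanSpace ℝ (Fin d)) → ℝ)
    (f : EuclideanSpace ℝ (Fin d) → ℝ) (ν : Measure (EuclideanSpace ℝ (Fin d))) : ℝ :=
  (1/4) * ∫ y, ‖gradient (fun z => Real.log (f z)) y +
      ∑ k ∈ Finset.Icc 2 N, ∑ j : Fin k,
        ∫ x, gradient (fun z => W k (Function.update x j z)) y
          ∂(Measure.pi fun _ : Fin k => ν)‖^2 ∂ν

/-! ### Auxiliary lemmas -/

private lemma ofReal_exp_rpow (t c : ℝ) :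
    ENNReal.ofReal (Real.exp t) ^ c = ENNReal.ofReal (Real.exp (c * t)) := by
  rw [ENNReal.ofReal_rpow_of_pos (Real.exp_pos t), mul_comm, Real.exp_mul]

private lemma prod_ofReal_exp {ι : Type*} (s : Finset ι) (f : ι → ℝ) :
    ∏ i ∈ s, ENNReal.ofReal (Real.exp (f i)) = ENNReal.ofReal (Real.exp (∑ i ∈ s, f i)) := by
  rw [Real.exp_sum, ENNReal.ofReal_prod_of_nonneg fun i _ => (Real.exp_pos (f i)).le]

private lemma lintegral_rpow_le_rpow {Ω : Type*} [MeasurableSpace Ω] (P : Measure Ω)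
    [IsProbabilityMeasure P] (g : Ω → ℝ≥0∞) (hg : Measurable g) {r : ℝ}
    (hr0 : 0 ≤ r) (hr1 : r ≤ 1) :
    ∫⁻ ω, g ω ^ r ∂P ≤ (∫⁻ ω, g ω ∂P) ^ r := by
  have h := ENNReal.lintegral_prod_norm_pow_le (μ := P) (Finset.univ : Finset Bool)
      (f := fun b => if b then g else fun _ => 1)
      (fun b _ => by cases b <;> simp [hg.aemeasurable])
      (p := fun b => if b then r else 1 - r)
      (by rw [Fintype.sum_bool]; norm_num)
      (fun b _ => by cases b <;> simp [hr0, sub_nonneg.2 hr1])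
  simpa [Fintype.prod_bool, ENNReal.one_rpow, lintegral_one] using h

private lemma ereal_add_ne_bot {x y : EReal} (hx : x ≠ ⊥) (hy : y ≠ ⊥) : x + y ≠ ⊥ := by
  simp [EReal.add_eq_bot_iff, hx, hy]

private lemma ereal_sum_ne_bot {ι : Type*} (s : Finset ι) (x : ι → EReal)
    (hx : ∀ q ∈ s, x q ≠ ⊥) : ∑ q ∈ s, x q ≠ ⊥ := by
  induction s using Finset.cons_induction with
  | empty => simp
  | cons a s ha ih =>
    rw [Finset.sum_cons]
    exact ereal_add_ne_bot (hx a (Finset.mem_cons_self a s))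
      (ih fun q hq => hx q (Finset.mem_cons_of_mem hq))

private lemma ereal_coe_mul_ne_bot {c : ℝ} (hc : 0 ≤ c) {x : EReal} (hx : x ≠ ⊥) :
    (c : EReal) * x ≠ ⊥ := by
  rcases hc.eq_or_lt with rfl | h
  · simp
  rcases eq_or_ne x ⊤ with rfl | hxt
  · rw [EReal.mul_top_of_pos (by exact_mod_cast h)]; simp
  obtain ⟨xr, rfl⟩ : ∃ r : ℝ, (r : EReal) = x := ⟨x.toReal, EReal.coe_toReal hxt hx⟩
  rw [← EReal.coe_mul]
  exact EReal.coe_ne_bot _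

private lemma ereal_coe_mul_add {c : ℝ} (hc : 0 ≤ c) {x y : EReal} (hx : x ≠ ⊥) (hy : y ≠ ⊥) :
    (c : EReal) * (x + y) = (c : EReal) * x + (c : EReal) * y := by
  rcases hc.eq_or_lt with rfl | h
  · simp
  have hc' : (0 : EReal) < (c : EReal) := by exact_mod_cast h
  rcases eq_or_ne x ⊤ with rfl | hxt
  · rw [EReal.top_add_of_ne_bot hy, EReal.mul_top_of_pos hc',
      EReal.top_add_of_ne_bot (ereal_coe_mul_ne_bot h.le hy)]
  rcases eq_or_ne y ⊤ with rfl | hyt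
  · rw [EReal.add_top_of_ne_bot hx, EReal.mul_top_of_pos hc',
      EReal.add_top_of_ne_bot (ereal_coe_mul_ne_bot h.le hx)]
  obtain ⟨xr, rfl⟩ : ∃ r : ℝ, (r : EReal) = x := ⟨x.toReal, EReal.coe_toReal hxt hx⟩
  obtain ⟨yr, rfl⟩ : ∃ r : ℝ, (r : EReal) = y := ⟨y.toReal, EReal.coe_toReal hyt hy⟩
  norm_cast
  ring

private lemma ereal_coe_mul_sum {c : ℝ} (hc : 0 ≤ c) {ι : Type*} (s : Finset ι) (x : ι → EReal)
    (hx : ∀ q ∈ s, x q ≠ ⊥) :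
    (c : EReal) * ∑ q ∈ s, x q = ∑ q ∈ s, (c : EReal) * x q := by
  induction s using Finset.cons_induction with
  | empty => simp
  | cons a s ha ih =>
    rw [Finset.sum_cons, Finset.sum_cons,
      ereal_coe_mul_add hc (hx a (Finset.mem_cons_self a s))
        (ereal_sum_ne_bot s x fun q hq => hx q (Finset.mem_cons_of_mem hq)),
      ih fun q hq => hx q (Finset.mem_cons_of_mem hq)]

private lemma ennreal_log_prod {ι : Type*} (s : Finset ι) (a : ι → ℝ≥0∞) :
    ENNReal.log (∏ q ∈ s, a q) = ∑ q ∈ s, ENNReal.log (a q) := by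
  induction s using Finset.cons_induction with
  | empty => simp
  | cons i s hi ih => rw [Finset.prod_cons, Finset.sum_cons, ENNReal.log_mul_add, ih]

/-- If `(X i)` is a mutually independent family and the "blocks" `(q a j)ⱼ` are pairwise
disjoint in `a`, then the expectation of a product of nonnegative functions of the blocks
is the product of the expectations. -/
private lemma lintegral_prod_blocks {E Ω ι J κ : Type*} [MeasurableSpace E] [MeasurableSpace Ω]
    [Fintype J] (P : Measure Ω) [IsProbabilityMeasure P]
    (X : ι → Ω → E) (hX : ∀ i, Measurable (X i))
    (hind : iIndepFun X P)
    (q : κ → J → ι) (hq : ∀ a b, a ≠ b → ∀ j j', q a j ≠ q b j')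
    (G : κ → (J → E) → ℝ≥0∞) (hG : ∀ a, Measurable (G a)) (s : Finset κ) :
    ∫⁻ ω, ∏ a ∈ s, G a (fun j => X (q a j) ω) ∂P
      = ∏ a ∈ s, ∫⁻ ω, G a (fun j => X (q a j) ω) ∂P := by
  classical
  induction s using Finset.cons_induction with
  | empty => simp
  | cons a₀ s ha₀ ih =>
    simp only [Finset.prod_cons]
    have hmemS : ∀ j, q a₀ j ∈ Finset.image (q a₀) Finset.univ :=
      fun j => Finset.mem_image_of_mem _ (Finset.mem_univ j)
    have hmemT : ∀ a ∈ s, ∀ j, q a j ∈ s.biUnion fun b => Finset.image (q b) Finset.univ :=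
      fun a ha j => Finset.mem_biUnion.2 ⟨a, ha, Finset.mem_image_of_mem _ (Finset.mem_univ j)⟩
    set S := Finset.image (q a₀) Finset.univ with hS
    set T := s.biUnion fun b => Finset.image (q b) Finset.univ with hT
    have hST : Disjoint S T := by
      rw [Finset.disjoint_left]
      rintro i hiS hiT
      rw [hS, Finset.mem_image] at hiS
      obtain ⟨j, -, rfl⟩ := hiS
      rw [hT, Finset.mem_biUnion] at hiT
      obtain ⟨b, hb, hb2⟩ := hiT
      obtain ⟨j', -, hj'⟩ := Finset.mem_image.1 hb2
      exact hq a₀ b (fun h => ha₀ (h ▸ hb)) j j' hj'.symm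
    have hF : Measurable (fun y : S → E => G a₀ fun j => y ⟨q a₀ j, hmemS j⟩) :=
      (hG a₀).comp (measurable_pi_lambda _ fun j => measurable_pi_apply _)
    have hGf : Measurable
        (fun y : T → E => ∏ a ∈ s.attach, G a.1 fun j => y ⟨q a.1 j, hmemT a.1 a.2 j⟩) :=
      Finset.measurable_prod _ fun a _ =>
        (hG a.1).comp (measurable_pi_lambda _ fun j => measurable_pi_apply _)
    have hbase := hind.indepFun_finset S T hST hX
    have hcomp : IndepFun (fun ω => G a₀ fun j => X (q a₀ j) ω)
        (fun ω => ∏ a ∈ s.attach, G a.1 fun j => X (q a.1 j) ω) P := hbase.comp hF hGf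
    have hmeas1 : Measurable fun ω => G a₀ fun j => X (q a₀ j) ω :=
      (hG a₀).comp (measurable_pi_lambda _ fun j => hX _)
    have hmeas2 : Measurable fun ω => ∏ a ∈ s.attach, G a.1 fun j => X (q a.1 j) ω :=
      Finset.measurable_prod _ fun a _ => (hG a.1).comp (measurable_pi_lambda _ fun j => hX _)
    have hprod := lintegral_mul_eq_lintegral_mul_lintegral_of_indepFun''
      hmeas1.aemeasurable hmeas2.aemeasurable hcomp
    have e : ∀ ω : Ω, ∏ a ∈ s.attach, G a.1 (fun j => X (q a.1 j) ω)
        = ∏ a ∈ s, G a (fun j => X (q a j) ω) :=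
      fun ω => Finset.prod_attach s fun a => G a fun j => X (q a j) ω
    calc ∫⁻ ω, (G a₀ fun j => X (q a₀ j) ω) * ∏ a ∈ s, G a (fun j => X (q a j) ω) ∂P
        = ∫⁻ ω, (G a₀ fun j => X (q a₀ j) ω)
            * ∏ a ∈ s.attach, G a.1 (fun j => X (q a.1 j) ω) ∂P := by
          simp_rw [e]
      _ = (∫⁻ ω, G a₀ fun j => X (q a₀ j) ω ∂P)
            * ∫⁻ ω, ∏ a ∈ s.attach, G a.1 (fun j => X (q a.1 j) ω) ∂P := hprod
      _ = (∫⁻ ω, G a₀ fun j => X (q a₀ j) ω ∂P)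
            * ∫⁻ ω, ∏ a ∈ s, G a (fun j => X (q a j) ω) ∂P := by simp_rw [e]
      _ = _ := by rw [ih]

/-- **A Jensen-type inequality for decoupled U-statistics.** For `1 ≤ k ≤ n` and mutually
independent random variables `(X^j_i)`, with all logarithms and expectations taken in
`(-∞,+∞]`,
`log E[exp(|I_n^k|⁻¹ ∑_i Φ_i(X^1_{i₁},…,X^k_{i_k}))]
  ≤ ((n-k+1)/|I_n^k|) ∑_i log E[exp((n-k+1)⁻¹ Φ_i(X^1_{i₁},…,X^k_{i_k}))]`. -/
theorem ustat_jensen_decoupled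
    {E : Type*} [MeasurableSpace E] {Ω : Type*} [MeasurableSpace Ω]
    (P : Measure Ω) [IsProbabilityMeasure P]
    (k n : ℕ) (hk : 1 ≤ k) (hkn : k ≤ n)
    (X : Fin k → Fin n → Ω → E) (hXmeas : ∀ j i, Measurable (X j i))
    (hXindep : iIndepFun
      (fun (ji : Fin k × Fin n) ω => X ji.1 ji.2 ω) P)
    (Φ : (Fin k ↪ Fin n) → (Fin k → E) → ℝ) (hΦmeas : ∀ p, Measurable (Φ p)) :
    logMGF P (fun ω => ((Nat.descFactorial n k : ℝ))⁻¹ *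
        ∑ p : Fin k ↪ Fin n, Φ p (fun j => X j (p j) ω))
      ≤ ((((n - k + 1 : ℕ) : ℝ) / (Nat.descFactorial n k : ℝ) : ℝ) : EReal) *
        ∑ p : Fin k ↪ Fin n,
          logMGF P (fun ω => (((n - k + 1 : ℕ) : ℝ))⁻¹ * Φ p (fun j => X j (p j) ω)) := by
  classical
  have hn : 0 < n := hk.trans hkn
  haveI : NeZero n := ⟨hn.ne'⟩
  have hn' : (n : ℝ) ≠ 0 := Nat.cast_ne_zero.2 hn.ne'
  set m : ℝ := (Nat.descFactorial n k : ℝ) with hm_def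
  have hm : 0 < m := by
    have h0 : n.descFactorial k ≠ 0 := by
      rw [Ne, Nat.descFactorial_eq_zero_iff_lt]; omega
    rw [hm_def]
    exact_mod_cast Nat.pos_of_ne_zero h0
  set L : ℝ := ((n - k + 1 : ℕ) : ℝ) with hL_def
  have hL : 0 < L := by
    have h0 : 0 < n - k + 1 := by omega
    rw [hL_def]
    exact_mod_cast h0
  have hLn : L ≤ (n : ℝ) := by
    have h0 : n - k + 1 ≤ n := by omega
    rw [hL_def]
    exact_mod_cast h0
  set Y : (Fin k ↪ Fin n) → Ω → ℝ := fun q ω => Φ q fun j => X j (q j) ω with hY_def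
  have hYmeas : ∀ q, Measurable (Y q) := fun q =>
    (hΦmeas q).comp (measurable_pi_lambda _ fun j => hXmeas j (q j))
  have hEmeas : ∀ (c : ℝ) (q : Fin k ↪ Fin n),
      Measurable fun ω => ENNReal.ofReal (Real.exp (c * Y q ω)) :=
    fun c q => (((hYmeas q).const_mul c).exp).ennreal_ofReal
  set A : (Fin k ↪ Fin n) → ℝ≥0∞ :=
    fun q => ∫⁻ ω, ENNReal.ofReal (Real.exp (L⁻¹ * Y q ω)) ∂P with hA_def
  have hApos : ∀ q : Fin k ↪ Fin n, 0 < A q := by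
    intro q
    rw [hA_def, lintegral_pos_iff_support (hEmeas L⁻¹ q)]
    have hsupp : (Function.support fun ω => ENNReal.ofReal (Real.exp (L⁻¹ * Y q ω)))
        = Set.univ :=
      Set.eq_univ_of_forall fun ω => (ENNReal.ofReal_pos.2 (Real.exp_pos _)).ne'
    rw [hsupp, measure_univ]
    exact one_pos
  set shift : Fin n → (Fin k ↪ Fin n) → (Fin k ↪ Fin n) :=
    fun a p => p.trans (Equiv.addRight a).toEmbedding with hshift_def
  have hshift_apply : ∀ (a : Fin n) (p : Fin k ↪ Fin n) (j : Fin k),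
      shift a p j = p j + a := fun a p j => rfl
  have hbij : ∀ a : Fin n, Function.Bijective (shift a) := by
    intro a
    constructor
    · intro p p' h
      ext j
      have h2 : shift a p j = shift a p' j := by rw [h]
      rw [hshift_apply, hshift_apply] at h2
      exact congrArg Fin.val (add_left_injective a h2)
    · intro p
      refine ⟨p.trans (Equiv.addRight a).symm.toEmbedding, ?_⟩
      ext j
      exact congrArg Fin.val (Equiv.apply_symm_apply (Equiv.addRight a) (p j))
  have hcard : (Fintype.card (Fin k ↪ Fin n) : ℝ) = m := by
    rw [Fintype.card_embedding_eq, Fintype.card_fin, Fintype.card_fin]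
  -- the pointwise convex-combination identity
  have key_point : ∀ ω, ENNReal.ofReal (Real.exp (m⁻¹ * ∑ q : Fin k ↪ Fin n, Y q ω))
      = ∏ p : Fin k ↪ Fin n,
          (ENNReal.ofReal (Real.exp ((n : ℝ)⁻¹ * ∑ a : Fin n, Y (shift a p) ω))) ^ (m⁻¹) := by
    intro ω
    have harith : ∑ p : Fin k ↪ Fin n, m⁻¹ * ((n : ℝ)⁻¹ * ∑ a : Fin n, Y (shift a p) ω)
        = m⁻¹ * ∑ q : Fin k ↪ Fin n, Y q ω := by
      have swap : ∑ p : Fin k ↪ Fin n, ∑ a : Fin n, Y (shift a p) ω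
          = (n : ℝ) * ∑ q : Fin k ↪ Fin n, Y q ω := by
        rw [Finset.sum_comm]
        have hre : ∀ a : Fin n, ∑ p : Fin k ↪ Fin n, Y (shift a p) ω
            = ∑ q : Fin k ↪ Fin n, Y q ω :=
          fun a => Fintype.sum_bijective (shift a) (hbij a) _ _ fun p => rfl
        simp_rw [hre]
        rw [Finset.sum_const, Finset.card_univ, Fintype.card_fin, nsmul_eq_mul]
      rw [← Finset.mul_sum, ← Finset.mul_sum, swap, inv_mul_cancel_left₀ hn']
    calc ENNReal.ofReal (Real.exp (m⁻¹ * ∑ q : Fin k ↪ Fin n, Y q ω))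
        = ENNReal.ofReal (Real.exp
            (∑ p : Fin k ↪ Fin n, m⁻¹ * ((n : ℝ)⁻¹ * ∑ a : Fin n, Y (shift a p) ω))) := by
          rw [harith]
      _ = ∏ p : Fin k ↪ Fin n, ENNReal.ofReal
            (Real.exp (m⁻¹ * ((n : ℝ)⁻¹ * ∑ a : Fin n, Y (shift a p) ω))) :=
          (prod_ofReal_exp _ _).symm
      _ = ∏ p : Fin k ↪ Fin n,
            (ENNReal.ofReal (Real.exp ((n : ℝ)⁻¹ * ∑ a : Fin n, Y (shift a p) ω))) ^ (m⁻¹) := by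
          simp_rw [ofReal_exp_rpow]
  -- Hölder's inequality over the family indexed by `p`
  have hFmeas : ∀ p : Fin k ↪ Fin n,
      Measurable fun ω => ENNReal.ofReal (Real.exp ((n : ℝ)⁻¹ * ∑ a : Fin n, Y (shift a p) ω)) :=
    fun p => (((Finset.univ.measurable_sum fun a _ =>
      hYmeas (shift a p)).const_mul ((n : ℝ)⁻¹)).exp).ennreal_ofReal
  have holder : (∫⁻ ω, ∏ p : Fin k ↪ Fin n,
        (ENNReal.ofReal (Real.exp ((n : ℝ)⁻¹ * ∑ a : Fin n, Y (shift a p) ω))) ^ (m⁻¹) ∂P)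
      ≤ ∏ p : Fin k ↪ Fin n,
        (∫⁻ ω, ENNReal.ofReal (Real.exp ((n : ℝ)⁻¹ * ∑ a : Fin n, Y (shift a p) ω)) ∂P)
          ^ (m⁻¹) := by
    refine ENNReal.lintegral_prod_norm_pow_le _ (fun p _ => (hFmeas p).aemeasurable) ?_
        (fun p _ => inv_nonneg.2 hm.le)
    rw [Finset.sum_const, Finset.card_univ, nsmul_eq_mul, hcard, mul_inv_cancel₀ hm.ne']
  -- independence: the integral over each shift-orbit factorizes
  have hYeq : ∀ (a : Fin n) (p : Fin k ↪ Fin n) (ω : Ω),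
      Y (shift a p) ω = Φ (shift a p) fun j => X j (p j + a) ω := fun a p ω => rfl
  have indep_step : ∀ p : Fin k ↪ Fin n,
      (∫⁻ ω, ENNReal.ofReal (Real.exp ((n : ℝ)⁻¹ * ∑ a : Fin n, Y (shift a p) ω)) ∂P)
        = ∏ a : Fin n, ∫⁻ ω, ENNReal.ofReal (Real.exp ((n : ℝ)⁻¹ * Y (shift a p) ω)) ∂P := by
    intro p
    have hpt : ∀ ω, ENNReal.ofReal (Real.exp ((n : ℝ)⁻¹ * ∑ a : Fin n, Y (shift a p) ω))
        = ∏ a : Fin n, ENNReal.ofReal (Real.exp ((n : ℝ)⁻¹ * Y (shift a p) ω)) := by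
      intro ω
      rw [prod_ofReal_exp, Finset.mul_sum]
    simp_rw [hpt, hYeq]
    have hdisj : ∀ a b : Fin n, a ≠ b → ∀ j j' : Fin k,
        (j, p j + a) ≠ (j', p j' + b) := by
      intro a b hab j j' h
      apply hab
      have h1 : j = j' := congrArg Prod.fst h
      subst h1
      have h2 : p j + a = p j + b := congrArg Prod.snd h
      exact add_left_cancel h2
    exact lintegral_prod_blocks P (fun ji ω => X ji.1 ji.2 ω) (fun ji => hXmeas ji.1 ji.2)
      hXindep (fun a j => (j, p j + a)) hdisj
      (fun a y => ENNReal.ofReal (Real.exp ((n : ℝ)⁻¹ * Φ (shift a p) y)))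
      (fun a => (((hΦmeas (shift a p)).const_mul _).exp).ennreal_ofReal) Finset.univ
  -- Jensen: move from scale `n⁻¹` to scale `L⁻¹`
  have power_step : ∀ q : Fin k ↪ Fin n,
      (∫⁻ ω, ENNReal.ofReal (Real.exp ((n : ℝ)⁻¹ * Y q ω)) ∂P) ≤ (A q) ^ (L / (n : ℝ)) := by
    intro q
    have hpt : ∀ ω, ENNReal.ofReal (Real.exp ((n : ℝ)⁻¹ * Y q ω))
        = (ENNReal.ofReal (Real.exp (L⁻¹ * Y q ω))) ^ (L / (n : ℝ)) := by
      intro ω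
      rw [ofReal_exp_rpow]
      congr 2
      field_simp
    simp_rw [hpt]
    exact lintegral_rpow_le_rpow P _ (hEmeas L⁻¹ q) (by positivity)
      (by rw [div_le_one (by positivity)]; exact hLn)
  -- the main estimate in `ℝ≥0∞`
  have main : (∫⁻ ω, ENNReal.ofReal (Real.exp (m⁻¹ * ∑ q : Fin k ↪ Fin n, Y q ω)) ∂P)
      ≤ ∏ q : Fin k ↪ Fin n, A q ^ (L / m) := by
    calc ∫⁻ ω, ENNReal.ofReal (Real.exp (m⁻¹ * ∑ q : Fin k ↪ Fin n, Y q ω)) ∂P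
        = ∫⁻ ω, ∏ p : Fin k ↪ Fin n,
            (ENNReal.ofReal (Real.exp ((n : ℝ)⁻¹ * ∑ a : Fin n, Y (shift a p) ω))) ^ (m⁻¹) ∂P :=
          lintegral_congr key_point
      _ ≤ ∏ p : Fin k ↪ Fin n,
            (∫⁻ ω, ENNReal.ofReal (Real.exp ((n : ℝ)⁻¹ * ∑ a : Fin n, Y (shift a p) ω)) ∂P)
              ^ (m⁻¹) := holder
      _ = ∏ p : Fin k ↪ Fin n, (∏ a : Fin n,
            ∫⁻ ω, ENNReal.ofReal (Real.exp ((n : ℝ)⁻¹ * Y (shift a p) ω)) ∂P) ^ (m⁻¹) := by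
          simp_rw [indep_step]
      _ ≤ ∏ p : Fin k ↪ Fin n, (∏ a : Fin n, (A (shift a p)) ^ (L / (n : ℝ))) ^ (m⁻¹) := by
          refine Finset.prod_le_prod' fun p _ => ?_
          exact ENNReal.rpow_le_rpow (Finset.prod_le_prod' fun a _ => power_step _)
            (inv_nonneg.2 hm.le)
      _ = ∏ p : Fin k ↪ Fin n, ∏ a : Fin n, (A (shift a p)) ^ (L / (n : ℝ) * m⁻¹) := by
          simp_rw [← ENNReal.prod_rpow_of_nonneg (inv_nonneg.2 hm.le), ← ENNReal.rpow_mul]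
      _ = ∏ q : Fin k ↪ Fin n, A q ^ (L / m) := by
          rw [Finset.prod_comm]
          have h1 : ∀ a : Fin n, ∏ p : Fin k ↪ Fin n, (A (shift a p)) ^ (L / (n : ℝ) * m⁻¹)
              = ∏ q : Fin k ↪ Fin n, A q ^ (L / (n : ℝ) * m⁻¹) :=
            fun a => Fintype.prod_bijective (shift a) (hbij a) _ _ fun p => rfl
          simp_rw [h1]
          rw [Finset.prod_const, Finset.card_univ, Fintype.card_fin, ← Finset.prod_pow]
          refine Finset.prod_congr rfl fun q _ => ?_
          rw [← ENNReal.rpow_natCast (A q ^ (L / (n : ℝ) * m⁻¹)) n, ← ENNReal.rpow_mul]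
          congr 1
          field_simp
  -- take logarithms
  have hrhs : ENNReal.log (∏ q : Fin k ↪ Fin n, A q ^ (L / m))
      = ((L / m : ℝ) : EReal) * ∑ q : Fin k ↪ Fin n, ENNReal.log (A q) := by
    rw [ennreal_log_prod]
    simp_rw [ENNReal.log_rpow]
    exact (ereal_coe_mul_sum (div_nonneg hL.le hm.le) _ _ fun q _ => by
      simp [ENNReal.log_eq_bot_iff, (hApos q).ne']).symm
  calc logMGF P (fun ω => m⁻¹ * ∑ p : Fin k ↪ Fin n, Φ p fun j => X j (p j) ω)
      = ENNReal.log (∫⁻ ω, ENNReal.ofReal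
          (Real.exp (m⁻¹ * ∑ q : Fin k ↪ Fin n, Y q ω)) ∂P) := rfl
    _ ≤ ENNReal.log (∏ q : Fin k ↪ Fin n, A q ^ (L / m)) := ENNReal.log_monotone main
    _ = ((L / m : ℝ) : EReal) * ∑ q : Fin k ↪ Fin n, ENNReal.log (A q) := hrhs
    _ = ((L / m : ℝ) : EReal) * ∑ p : Fin k ↪ Fin n,
          logMGF P (fun ω => L⁻¹ * Φ p fun j => X j (p j) ω) := rfl

end
end

section
/- Let k ≥ 2, let (X_i)_{i≥1} be i.i.d. ℝ^d-valued random variables with law α, and let W : (ℝ^d)^k → ℝ be measurable, symmetric, with E[exp(λ |W(X_1,…,X_k)|)] < ∞ for every λ > 0. Then there exists a sequence (W_m)_{m≥1} of bounded continuous functions (ℝ^d)^k → ℝ such that for every δ > 0, lim_{m→∞} limsup_{n→∞} (1/n) log P(|U_n(W_m)(X_1,…,X_n) − U_n(W)(X_1,…,X_n)| > δ) = −∞. -/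
open MeasureTheory ProbabilityTheory Filter Classical
open scoped ENNReal NNReal Topology RealInnerProductSpace

noncomputable section

set_option maxHeartbeats 1000000

section UstatApproxAux

variable {E : Type*} [MeasurableSpace E]

/-- reindexing a product of identical probability measures along an injective map -/
private lemma pi_map_reindex {ι ι' : Type*} [Fintype ι] [Fintype ι']
    (α : Measure E) [IsProbabilityMeasure α] {J : ι' → ι} (hJ : Function.Injective J) :
    Measure.map (fun (x : ι → E) (i' : ι') => x (J i')) (Measure.pi fun _ : ι => α)
      = Measure.pi fun _ : ι' => α := by
  classical
  refine (Measure.pi_eq fun s hs => ?_).symm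
  have hmeas : Measurable (fun (x : ι → E) (i' : ι') => x (J i')) :=
    measurable_pi_lambda _ fun i' => measurable_pi_apply _
  rw [Measure.map_apply hmeas (MeasurableSet.univ_pi hs)]
  set s' : ι → Set E := fun i => if h : ∃ i', J i' = i then s h.choose else Set.univ with hs'
  have key : ∀ i', s' (J i') = s i' := by
    intro i'
    have h : ∃ i'', J i'' = J i' := ⟨i', rfl⟩
    have : h.choose = i' := hJ h.choose_spec
    simp only [hs', dif_pos h, this]
  have hpre : (fun (x : ι → E) (i' : ι') => x (J i')) ⁻¹' (Set.pi Set.univ s)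
      = Set.pi Set.univ s' := by
    ext x
    simp only [Set.mem_preimage, Set.mem_pi, Set.mem_univ, true_implies]
    constructor
    · intro h i
      by_cases hi : ∃ i'', J i'' = i
      · have := h hi.choose
        simpa only [hs', dif_pos hi, hi.choose_spec] using this
      · simp [hs', dif_neg hi]
    · intro h i'
      have := h (J i')
      rwa [key i'] at this
  rw [hpre, Measure.pi_pi]
  have hsub : Finset.univ.image J ⊆ Finset.univ := Finset.subset_univ _
  rw [← Finset.prod_subset hsub (fun i _ hi => ?_), Finset.prod_image (fun a _ b _ h => hJ h)]
  · exact Finset.prod_congr rfl fun i' _ => by rw [key i']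
  · have : ¬ ∃ i', J i' = i := by
      intro ⟨i', hi'⟩
      exact hi (Finset.mem_image.2 ⟨i', Finset.mem_univ _, hi'⟩)
    simp [hs', dif_neg this]

private lemma lintegral_pi_blocks (α : Measure E) [IsProbabilityMeasure α]
    {k : ℕ} {g : (Fin k → E) → ℝ≥0∞} (hg : Measurable g) :
    ∀ (m : ℕ) {ι : Type} [Fintype ι] (J : Fin m × Fin k → ι), Function.Injective J →
      ∫⁻ x : ι → E, ∏ j : Fin m, g (fun r => x (J (j, r))) ∂(Measure.pi fun _ : ι => α)
        = (∫⁻ y, g y ∂(Measure.pi fun _ : Fin k => α)) ^ m := by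
  intro m
  induction m with
  | zero =>
    intro ι _ J _
    simp
  | succ m ih =>
    intro ι _ J hJ
    set c : Fin k ⊕ (Fin m × Fin k) → ι :=
      Sum.elim (fun r => J (0, r)) (fun p => J (p.1.succ, p.2)) with hc
    have hcinj : Function.Injective c := by
      rintro (r₁ | p₁) (r₂ | p₂) h <;> simp only [hc, Sum.elim_inl, Sum.elim_inr] at h
      · have := hJ h; simp_all
      · have := hJ h
        exact absurd (congrArg Prod.fst this).symm (Fin.succ_ne_zero _)
      · have := hJ h
        exact absurd (congrArg Prod.fst this) (Fin.succ_ne_zero _)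
      · have h2 := hJ h
        simp only [Prod.mk.injEq] at h2
        have := Fin.succ_injective _ h2.1
        exact congrArg Sum.inr (Prod.ext this h2.2)
    set F : (Fin k ⊕ (Fin m × Fin k) → E) → ℝ≥0∞ :=
      fun w => g (fun r => w (.inl r)) * ∏ j : Fin m, g (fun r => w (.inr (j, r))) with hF
    have hFmeas : Measurable F := by
      apply Measurable.mul
      · exact hg.comp (measurable_pi_lambda _ fun r => measurable_pi_apply _)
      · exact Finset.measurable_prod _ fun j _ =>
          hg.comp (measurable_pi_lambda _ fun r => measurable_pi_apply _)
    have step1 : ∫⁻ x : ι → E, ∏ j : Fin (m+1), g (fun r => x (J (j, r)))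
          ∂(Measure.pi fun _ : ι => α)
        = ∫⁻ w, F w ∂(Measure.pi fun _ : Fin k ⊕ (Fin m × Fin k) => α) := by
      rw [← pi_map_reindex α hcinj, lintegral_map hFmeas
        (measurable_pi_lambda _ fun i' => measurable_pi_apply _)]
      congr 1
      ext x
      rw [hF]
      simp only [hc, Sum.elim_inl, Sum.elim_inr]
      exact Fin.prod_univ_succ _
    rw [step1]
    have step2 : ∫⁻ w, F w ∂(Measure.pi fun _ : Fin k ⊕ (Fin m × Fin k) => α)
        = ∫⁻ p, F ((MeasurableEquiv.sumPiEquivProdPi (fun _ => E)).symm p)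
            ∂((Measure.pi fun _ : Fin k => α).prod (Measure.pi fun _ : Fin m × Fin k => α)) :=
      ((measurePreserving_sumPiEquivProdPi_symm
        (fun _ : Fin k ⊕ (Fin m × Fin k) => α)).lintegral_comp hFmeas).symm
    rw [step2]
    have step3 : ∀ p : (Fin k → E) × (Fin m × Fin k → E),
        F ((MeasurableEquiv.sumPiEquivProdPi (fun _ => E)).symm p)
          = g p.1 * ∏ j : Fin m, g (fun r => p.2 (j, r)) := fun p => rfl
    simp_rw [step3]
    rw [lintegral_prod_mul (f := g)
      (g := fun z : Fin m × Fin k → E => ∏ j : Fin m, g fun r => z (j, r)) hg.aemeasurable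
      (Finset.measurable_prod _ (fun j _ =>
        hg.comp (measurable_pi_lambda _ fun r => measurable_pi_apply _))).aemeasurable]
    have ihid : (∫⁻ y : Fin m × Fin k → E, ∏ j : Fin m, g (fun r => y (j, r))
          ∂(Measure.pi fun _ : Fin m × Fin k => α))
        = (∫⁻ y, g y ∂(Measure.pi fun _ : Fin k => α)) ^ m := by
      simpa using ih (ι := Fin m × Fin k) (fun p => p) (fun _ _ h => h)
    rw [ihid, pow_succ]
    ring

private lemma exists_perm_comp {k n : ℕ} (e p : Fin k ↪ Fin n) :
    ∃ σ : Equiv.Perm (Fin n), ∀ r, σ (e r) = p r := by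
  classical
  let A : Set (Fin n) := Set.range ⇑e
  let B : Set (Fin n) := Set.range ⇑p
  let e₁ : Fin k ≃ A := Equiv.ofInjective _ e.injective
  let p₁ : Fin k ≃ B := Equiv.ofInjective _ p.injective
  have hA : Fintype.card A = k := by
    have := Fintype.card_congr e₁.symm; simpa using this
  have hB : Fintype.card B = k := by
    have := Fintype.card_congr p₁.symm; simpa using this
  have hcard : Fintype.card (↥Aᶜ) = Fintype.card (↥Bᶜ) := by
    rw [Fintype.card_compl_set, Fintype.card_compl_set, hA, hB]
  let cEquiv : ↥Aᶜ ≃ ↥Bᶜ := Fintype.equivOfCardEq hcard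
  refine ⟨((Equiv.Set.sumCompl A).symm.trans
    (((e₁.symm.trans p₁).sumCongr cEquiv).trans (Equiv.Set.sumCompl B))), fun r => ?_⟩
  have h1 : (Equiv.Set.sumCompl A).symm (e r) = Sum.inl (e₁ r) := by
    rw [Equiv.Set.sumCompl_symm_apply_of_mem (Set.mem_range_self r)]
    rfl
  simp only [Equiv.trans_apply, h1, Equiv.sumCongr_apply, Sum.map_inl,
    Equiv.Set.sumCompl_apply_inl]
  rw [Equiv.symm_apply_apply]
  rfl

private lemma sum_perm_comp {n k : ℕ} (e : Fin k ↪ Fin n) (H : (Fin k ↪ Fin n) → ℝ) :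
    (∑ σ : Equiv.Perm (Fin n), H (e.trans σ.toEmbedding)) * (Nat.descFactorial n k : ℝ)
      = (Nat.factorial n : ℝ) * ∑ p : Fin k ↪ Fin n, H p := by
  classical
  set F : Equiv.Perm (Fin n) → (Fin k ↪ Fin n) := fun σ => e.trans σ.toEmbedding with hF
  -- fibers all have the same cardinality
  have hfib : ∀ p q : Fin k ↪ Fin n,
      (Finset.univ.filter fun σ => F σ = p).card
        = (Finset.univ.filter fun σ => F σ = q).card := by
    intro p q
    obtain ⟨τ, hτ⟩ := exists_perm_comp p q
    apply Finset.card_nbij' (fun σ => τ * σ) (fun σ => τ⁻¹ * σ)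
    · intro σ hσ
      simp only [Finset.mem_coe, Finset.mem_filter, Finset.mem_univ, true_and] at hσ ⊢
      ext r
      simp only [hF, Function.Embedding.trans_apply, Equiv.coe_toEmbedding, Equiv.Perm.mul_apply]
      have : σ (e r) = p r := by
        have := congrArg (fun (f : Fin k ↪ Fin n) => f r) hσ
        simpa [hF] using this
      rw [this, hτ]
    · intro σ hσ
      simp only [Finset.mem_coe, Finset.mem_filter, Finset.mem_univ, true_and] at hσ ⊢
      ext r
      simp only [hF, Function.Embedding.trans_apply, Equiv.coe_toEmbedding, Equiv.Perm.mul_apply]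
      have hq : σ (e r) = q r := by
        have := congrArg (fun (f : Fin k ↪ Fin n) => f r) hσ
        simpa [hF] using this
      rw [hq]
      rw [← hτ r]
      simp
    · intro σ _; simp [mul_assoc, ← Equiv.Perm.mul_def]
    · intro σ _; simp [mul_assoc, ← Equiv.Perm.mul_def]
  set c : ℕ := (Finset.univ.filter fun σ => F σ = e).card with hc
  have hsum : ∑ σ : Equiv.Perm (Fin n), H (F σ) = ∑ p : Fin k ↪ Fin n, (c : ℝ) * H p := by
    rw [← Finset.sum_fiberwise_of_maps_to (g := F) (fun σ _ => Finset.mem_univ (F σ))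
      (fun σ => H (F σ))]
    refine Finset.sum_congr rfl fun p _ => ?_
    have : ∀ σ ∈ Finset.univ.filter fun σ => F σ = p, H (F σ) = H p := by
      intro σ hσ
      simp only [Finset.mem_filter] at hσ
      simp [hσ.2]
    rw [Finset.sum_congr rfl this, Finset.sum_const, hfib p e, ← hc, nsmul_eq_mul]
  have hcount : c * Nat.descFactorial n k = Nat.factorial n := by
    have := Finset.card_eq_sum_card_fiberwise (f := F) (s := Finset.univ)
      (t := Finset.univ) (fun σ _ => Finset.mem_univ (F σ))
    rw [Finset.card_univ, Fintype.card_perm, Fintype.card_fin] at this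
    have h2 : ∀ p ∈ (Finset.univ : Finset (Fin k ↪ Fin n)),
        (Finset.univ.filter fun σ => F σ = p).card = c := fun p _ => hfib p e
    rw [Finset.sum_congr rfl h2, Finset.sum_const, Finset.card_univ,
      Fintype.card_embedding_eq, Fintype.card_fin, Fintype.card_fin, smul_eq_mul] at this
    rw [mul_comm]
    exact this.symm
  have hc' : (c : ℝ) * (Nat.descFactorial n k : ℝ) = (Nat.factorial n : ℝ) := by
    exact_mod_cast congrArg (Nat.cast : ℕ → ℝ) hcount
  rw [hsum, ← Finset.mul_sum]
  calc ((c : ℝ) * ∑ p : Fin k ↪ Fin n, H p) * (Nat.descFactorial n k : ℝ)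
      = ((c : ℝ) * (Nat.descFactorial n k : ℝ)) * ∑ p : Fin k ↪ Fin n, H p := by ring
    _ = (Nat.factorial n : ℝ) * ∑ p : Fin k ↪ Fin n, H p := by rw [hc']

private lemma map_pi {Ω : Type*} [MeasurableSpace Ω] (P : Measure Ω) [IsProbabilityMeasure P]
    (α : Measure E) [IsProbabilityMeasure α]
    (X : ℕ → Ω → E) (hmeas : ∀ i, Measurable (X i))
    (hindep : iIndepFun X P)
    (hlaw : ∀ i, Measure.map (X i) P = α) (n : ℕ) :
    Measure.map (fun ω => fun i : Fin n => X (i : ℕ) ω) P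
      = Measure.pi (fun _ : Fin n => α) := by
  classical
  have hm : Measurable (fun ω => fun i : Fin n => X (i : ℕ) ω) :=
    measurable_pi_lambda _ fun i => hmeas _
  refine (Measure.pi_eq fun s hs => ?_).symm
  rw [Measure.map_apply hm (MeasurableSet.univ_pi hs)]
  set t : ℕ → Set E := fun i => if h : i < n then s ⟨i, h⟩ else Set.univ with ht
  have htmeas : ∀ i ∈ Finset.range n, MeasurableSet (t i) := by
    intro i hi
    rw [Finset.mem_range] at hi
    simp only [ht, dif_pos hi]
    exact hs _
  have hpre : (fun ω => fun i : Fin n => X (i : ℕ) ω) ⁻¹' (Set.pi Set.univ s)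
      = ⋂ i ∈ Finset.range n, X i ⁻¹' t i := by
    ext ω
    simp only [Set.mem_preimage, Set.mem_pi, Set.mem_univ, true_implies, Set.mem_iInter,
      Finset.mem_range]
    constructor
    · intro h i hi
      simp only [ht, dif_pos hi]
      exact h ⟨i, hi⟩
    · intro h i
      have := h i i.2
      simpa only [ht, dif_pos i.2] using this
  rw [hpre, hindep.measure_inter_preimage_eq_mul (Finset.range n) htmeas]
  rw [← Fin.prod_univ_eq_prod_range (fun i => P (X i ⁻¹' t i)) n]
  refine Finset.prod_congr rfl fun i _ => ?_
  rw [← Measure.map_apply (hmeas i) (by simp only [ht, dif_pos i.2]; exact hs i), hlaw]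
  congr 1
  simp [ht, dif_pos i.2]
private lemma clamp_lip {b a u : ℝ} (ha : |a| ≤ b) :
    |a - max (-b) (min b u)| ≤ |a - u| := by
  rcases abs_le.1 ha with ⟨ha1, ha2⟩
  have hbb : -b ≤ b := le_trans ha1 ha2
  rcases le_total u (-b) with h | h
  · rw [min_eq_right (le_trans h hbb), max_eq_left h]
    rw [abs_of_nonneg (by linarith), abs_of_nonneg (by linarith)]
    linarith
  · rcases le_total u b with h' | h'
    · rw [min_eq_right h', max_eq_right h]
    · rw [min_eq_left h', max_eq_right hbb]
      rw [abs_of_nonpos (by linarith), abs_of_nonpos (by linarith)]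
      linarith

private lemma exists_approx {X : Type*} [MeasurableSpace X] [TopologicalSpace X]
    [TopologicalSpace.PseudoMetrizableSpace X] [NormalSpace X] [BorelSpace X]
    (β : Measure X) [IsProbabilityMeasure β]
    (W : X → ℝ) (hW : Measurable W)
    (hWexp : ∀ s > (0:ℝ), ∫⁻ y, ENNReal.ofReal (Real.exp (s * |W y|)) ∂β ≠ ⊤)
    (t : ℝ) (ht : 0 < t) :
    ∃ V : X → ℝ, Continuous V ∧ (∃ M, ∀ x, |V x| ≤ M) ∧
      ∫⁻ y, ENNReal.ofReal (Real.exp (t * |W y - V y|)) ∂β ≤ 2 := by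
  classical
  set f2 : X → ℝ≥0∞ := fun y => ENNReal.ofReal (Real.exp (2*t*|W y|)) with hf2
  have hf2meas : Measurable f2 :=
    (measurable_const.mul hW.abs).exp.ennreal_ofReal
  have hf2fin : ∫⁻ y, f2 y ∂β ≠ ⊤ := by
    have := hWexp (2*t) (by positivity)
    simpa [hf2] using this
  -- Step 1: choose a truncation level
  set T : ℕ → ℝ≥0∞ := fun R => ∫⁻ y, Set.indicator {y | (R:ℝ) < |W y|} f2 y ∂β with hT
  have hTtend : Tendsto T atTop (𝓝 0) := by
    have h0 : (0 : ℝ≥0∞) = ∫⁻ (_ : X), (0:ℝ≥0∞) ∂β := by simp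
    rw [hT, h0]
    apply tendsto_lintegral_of_dominated_convergence (bound := f2)
    · intro R
      exact hf2meas.indicator (measurableSet_lt measurable_const hW.abs)
    · intro R
      refine ae_of_all _ fun y => ?_
      exact Set.indicator_le_self _ _ y
    · exact hf2fin
    · refine ae_of_all _ fun y => ?_
      have hev : ∀ᶠ R : ℕ in atTop,
          Set.indicator {y : X | (R:ℝ) < |W y|} f2 y = 0 := by
        filter_upwards [eventually_ge_atTop ⌈|W y|⌉₊] with R hR
        apply Set.indicator_of_notMem
        simp only [Set.mem_setOf_eq, not_lt]
        calc |W y| ≤ (⌈|W y|⌉₊ : ℝ) := Nat.le_ceil _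
          _ ≤ R := by exact_mod_cast hR
      exact Tendsto.congr' (hev.mono fun R h => h.symm) tendsto_const_nhds
  obtain ⟨R, hR⟩ : ∃ R : ℕ, T R ≤ 1 := by
    have := hTtend.eventually_lt_const (by norm_num : (0:ℝ≥0∞) < 1)
    rcases this.exists with ⟨R, hR⟩
    exact ⟨R, hR.le⟩
  set b : ℝ := (R : ℝ) + 1 with hb
  have hb1 : 1 ≤ b := by rw [hb]; linarith [show (0:ℝ) ≤ (R:ℝ) from Nat.cast_nonneg R]
  have hb0 : 0 < b := lt_of_lt_of_le one_pos hb1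
  set Wb : X → ℝ := fun y => max (-b) (min b (W y)) with hWb
  have hWbmeas : Measurable Wb := measurable_const.max (measurable_const.min hW)
  have hWbabs : ∀ y, |Wb y| ≤ b := by
    intro y
    rw [abs_le]
    exact ⟨le_max_left _ _, max_le (by linarith) (min_le_left _ _)⟩
  have hWbeq : ∀ y, |W y| ≤ b → Wb y = W y := by
    intro y hy
    rcases abs_le.1 hy with ⟨h1, h2⟩
    rw [hWb]
    simp only
    rw [min_eq_right h2, max_eq_right h1]
  have hdiff : ∀ y, |W y - Wb y| ≤ |W y| := by
    intro y
    rcases le_total 0 (W y) with h | h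
    · have h1 : 0 ≤ min b (W y) := le_min hb0.le h
      have h2 : min b (W y) ≤ W y := min_le_right _ _
      have h3 : Wb y = min b (W y) := max_eq_right (by linarith)
      rw [h3, abs_of_nonneg (by linarith), abs_of_nonneg h]
      linarith
    · have h1 : min b (W y) = W y := min_eq_right (by linarith)
      have h3 : Wb y = max (-b) (W y) := by rw [hWb]; simp only [h1]
      rcases le_total (-b) (W y) with h4 | h4
      · rw [h3, max_eq_right h4]; simp
      · rw [h3, max_eq_left h4, abs_of_nonpos (by linarith), abs_of_nonpos h]
        linarith
  -- Step 1 conclusion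
  have H1 : ∫⁻ y, ENNReal.ofReal (Real.exp (2*t*|W y - Wb y|)) ∂β ≤ 2 := by
    have hpt : ∀ y, ENNReal.ofReal (Real.exp (2*t*|W y - Wb y|))
        ≤ 1 + Set.indicator {y : X | (R:ℝ) < |W y|} f2 y := by
      intro y
      by_cases h : |W y| ≤ (R : ℝ)
      · have : Wb y = W y := hWbeq y (by linarith)
        rw [this]
        simp only [sub_self, abs_zero, mul_zero, Real.exp_zero, ENNReal.ofReal_one]
        exact le_add_of_nonneg_right zero_le
      · rw [Set.indicator_of_mem (by simpa using lt_of_not_ge h)]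
        refine le_trans ?_ le_add_self
        rw [hf2]
        apply ENNReal.ofReal_le_ofReal
        apply Real.exp_le_exp.2
        have := hdiff y
        nlinarith [abs_nonneg (W y - Wb y), abs_nonneg (W y)]
    calc ∫⁻ y, ENNReal.ofReal (Real.exp (2*t*|W y - Wb y|)) ∂β
        ≤ ∫⁻ y, (1 + Set.indicator {y : X | (R:ℝ) < |W y|} f2 y) ∂β :=
          lintegral_mono hpt
      _ = 1 + T R := by
          rw [lintegral_add_left measurable_const]
          simp [hT]
      _ ≤ 1 + 1 := add_le_add_right hR _
      _ = 2 := one_add_one_eq_two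
  -- Step 2: continuous approximation of the truncation
  set K : ℝ := (Real.exp (4*t*b) - 1)/(2*b) with hK
  have hK0 : 0 ≤ K := by
    apply div_nonneg _ (by linarith)
    have : (1:ℝ) = Real.exp 0 := (Real.exp_zero).symm
    rw [this]
    have : Real.exp 0 ≤ Real.exp (4*t*b) := Real.exp_le_exp.2 (by positivity)
    linarith
  set εR : ℝ := 1/(K+1) with hεR
  have hεRpos : 0 < εR := by rw [hεR]; positivity
  have hWbL1 : MemLp Wb 1 β := by
    refine MemLp.of_bound hWbmeas.aestronglyMeasurable b (ae_of_all _ fun y => ?_)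
    simpa [Real.norm_eq_abs] using hWbabs y
  obtain ⟨g, hgnorm, -⟩ := hWbL1.exists_boundedContinuous_eLpNorm_sub_le
    ENNReal.one_ne_top (ε := ENNReal.ofReal εR) (ENNReal.ofReal_pos.2 hεRpos).ne'
  set V : X → ℝ := fun y => max (-b) (min b (g y)) with hV
  have hVcont : Continuous V := continuous_const.max (continuous_const.min g.continuous)
  have hVmeas : Measurable V := hVcont.measurable
  have hVabs : ∀ y, |V y| ≤ b := by
    intro y
    rw [abs_le]
    exact ⟨le_max_left _ _, max_le (by linarith) (min_le_left _ _)⟩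
  have hVlip : ∀ y, |Wb y - V y| ≤ |Wb y - g y| := fun y => clamp_lip (hWbabs y)
  have hchord : ∀ u : ℝ, 0 ≤ u → u ≤ 2*b → Real.exp (2*t*u) ≤ 1 + K * u := by
    intro u hu hub
    set θ : ℝ := u/(2*b) with hθ
    have hθ0 : 0 ≤ θ := by positivity
    have hθ1 : θ ≤ 1 := by rw [hθ, div_le_one (by linarith)]; linarith
    have key := convexOn_exp.2 (Set.mem_univ (0:ℝ)) (Set.mem_univ (4*t*b))
      (by linarith : (0:ℝ) ≤ 1 - θ) hθ0 (by ring)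
    simp only [smul_eq_mul, mul_zero, zero_add, Real.exp_zero, mul_one] at key
    have harg : θ * (4*t*b) = 2*t*u := by
      rw [hθ]; field_simp; ring
    rw [harg] at key
    have : (1-θ) + θ * Real.exp (4*t*b) = 1 + K * u := by
      rw [hK, hθ]; field_simp; ring
    linarith
  have H2 : ∫⁻ y, ENNReal.ofReal (Real.exp (2*t*|Wb y - V y|)) ∂β ≤ 2 := by
    have hpt : ∀ y, ENNReal.ofReal (Real.exp (2*t*|Wb y - V y|))
        ≤ 1 + ENNReal.ofReal K * (‖Wb y - g y‖₊ : ℝ≥0∞) := by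
      intro y
      have hu0 : (0:ℝ) ≤ |Wb y - V y| := abs_nonneg _
      have hub : |Wb y - V y| ≤ 2*b := by
        have := abs_sub_abs_le_abs_sub (Wb y) (V y)
        have h1 := hWbabs y
        have h2 := hVabs y
        calc |Wb y - V y| ≤ |Wb y| + |V y| := abs_sub _ _
          _ ≤ 2*b := by linarith
      calc ENNReal.ofReal (Real.exp (2*t*|Wb y - V y|))
          ≤ ENNReal.ofReal (1 + K * |Wb y - V y|) :=
            ENNReal.ofReal_le_ofReal (hchord _ hu0 hub)
        _ = 1 + ENNReal.ofReal (K * |Wb y - V y|) := by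
            rw [ENNReal.ofReal_add zero_le_one (by positivity), ENNReal.ofReal_one]
        _ ≤ 1 + ENNReal.ofReal (K * |Wb y - g y|) := by
            have := mul_le_mul_of_nonneg_left (hVlip y) hK0
            exact add_le_add_right (ENNReal.ofReal_le_ofReal this) _
        _ = 1 + ENNReal.ofReal K * (‖Wb y - g y‖₊ : ℝ≥0∞) := by
            rw [ENNReal.ofReal_mul hK0, ← enorm_eq_nnnorm, Real.enorm_eq_ofReal_abs]
    calc ∫⁻ y, ENNReal.ofReal (Real.exp (2*t*|Wb y - V y|)) ∂β
        ≤ ∫⁻ y, (1 + ENNReal.ofReal K * (‖Wb y - g y‖₊ : ℝ≥0∞)) ∂β := lintegral_mono hpt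
      _ = 1 + ENNReal.ofReal K * ∫⁻ y, (‖Wb y - g y‖₊ : ℝ≥0∞) ∂β := by
          rw [lintegral_add_left measurable_const, lintegral_const_mul]
          · simp
          · exact (hWbmeas.sub g.continuous.measurable).nnnorm.coe_nnreal_ennreal
      _ ≤ 1 + ENNReal.ofReal K * ENNReal.ofReal εR := by
          gcongr
          have : ∫⁻ y, (‖Wb y - g y‖₊ : ℝ≥0∞) ∂β = eLpNorm (Wb - ⇑g) 1 β := by
            rw [eLpNorm_one_eq_lintegral_enorm]
            simp [Pi.sub_apply, enorm_eq_nnnorm]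
          rw [this]
          exact hgnorm
      _ ≤ 1 + 1 := by
          gcongr
          rw [← ENNReal.ofReal_mul hK0, ← ENNReal.ofReal_one]
          apply ENNReal.ofReal_le_ofReal
          rw [hεR]
          rw [mul_one_div, div_le_one (by positivity)]
          linarith
      _ = 2 := one_add_one_eq_two
  -- Step 3: combine
  refine ⟨V, hVcont, ⟨b, hVabs⟩, ?_⟩
  have hpt : ∀ y, ENNReal.ofReal (Real.exp (t*|W y - V y|))
      ≤ 2⁻¹ * ENNReal.ofReal (Real.exp (2*t*|W y - Wb y|))
        + 2⁻¹ * ENNReal.ofReal (Real.exp (2*t*|Wb y - V y|)) := by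
    intro y
    have htri : |W y - V y| ≤ |W y - Wb y| + |Wb y - V y| := abs_sub_le _ _ _
    set a1 : ℝ := Real.exp (t*|W y - Wb y|)
    set a2 : ℝ := Real.exp (t*|Wb y - V y|)
    have hreal : Real.exp (t*|W y - V y|) ≤ 2⁻¹ * Real.exp (2*t*|W y - Wb y|)
        + 2⁻¹ * Real.exp (2*t*|Wb y - V y|) := by
      have h1 : Real.exp (t*|W y - V y|) ≤ a1 * a2 := by
        rw [← Real.exp_add]
        apply Real.exp_le_exp.2
        nlinarith [abs_nonneg (W y - Wb y), abs_nonneg (Wb y - V y)]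
      have h2 : 2 * a1 * a2 ≤ a1^2 + a2^2 := two_mul_le_add_sq a1 a2
      have e1 : a1^2 = Real.exp (2*t*|W y - Wb y|) := by
        rw [sq, ← Real.exp_add]; ring_nf
      have e2 : a2^2 = Real.exp (2*t*|Wb y - V y|) := by
        rw [sq, ← Real.exp_add]; ring_nf
      rw [← e1, ← e2]
      nlinarith [h1, h2]
    calc ENNReal.ofReal (Real.exp (t*|W y - V y|))
        ≤ ENNReal.ofReal (2⁻¹ * Real.exp (2*t*|W y - Wb y|)
            + 2⁻¹ * Real.exp (2*t*|Wb y - V y|)) := ENNReal.ofReal_le_ofReal hreal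
      _ = ENNReal.ofReal (2⁻¹ * Real.exp (2*t*|W y - Wb y|))
            + ENNReal.ofReal (2⁻¹ * Real.exp (2*t*|Wb y - V y|)) := by
          rw [ENNReal.ofReal_add (by positivity) (by positivity)]
      _ = 2⁻¹ * ENNReal.ofReal (Real.exp (2*t*|W y - Wb y|))
            + 2⁻¹ * ENNReal.ofReal (Real.exp (2*t*|Wb y - V y|)) := by
          rw [ENNReal.ofReal_mul (by norm_num), ENNReal.ofReal_mul (by norm_num)]
          have h12 : ENNReal.ofReal (2⁻¹ : ℝ) = 2⁻¹ := by
            rw [show (2⁻¹:ℝ) = 1/2 by norm_num, ENNReal.ofReal_div_of_pos (by norm_num)]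
            simp
          rw [h12]
  calc ∫⁻ y, ENNReal.ofReal (Real.exp (t*|W y - V y|)) ∂β
      ≤ ∫⁻ y, (2⁻¹ * ENNReal.ofReal (Real.exp (2*t*|W y - Wb y|))
          + 2⁻¹ * ENNReal.ofReal (Real.exp (2*t*|Wb y - V y|))) ∂β := lintegral_mono hpt
    _ = 2⁻¹ * ∫⁻ y, ENNReal.ofReal (Real.exp (2*t*|W y - Wb y|)) ∂β
          + 2⁻¹ * ∫⁻ y, ENNReal.ofReal (Real.exp (2*t*|Wb y - V y|)) ∂β := by
        rw [lintegral_add_left, lintegral_const_mul, lintegral_const_mul]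
        · exact (measurable_const.mul (hWbmeas.sub hVmeas).abs).exp.ennreal_ofReal
        · exact (measurable_const.mul (hW.sub hWbmeas).abs).exp.ennreal_ofReal
        · exact (measurable_const.mul
            ((measurable_const.mul (hW.sub hWbmeas).abs).exp.ennreal_ofReal))
    _ ≤ 2⁻¹ * 2 + 2⁻¹ * 2 := by gcongr
    _ = 2 := by
        rw [ENNReal.inv_mul_cancel (by norm_num) (by norm_num)]
        norm_num
private lemma prob_bound {E : Type*} [MeasurableSpace E] (α : Measure E) [IsProbabilityMeasure α]
    {k : ℕ} (hk : 0 < k) {Ψ : (Fin k → E) → ℝ} (hΨmeas : Measurable Ψ) (hΨ0 : ∀ y, 0 ≤ Ψ y)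
    {lam δ : ℝ} (hlam : 0 < lam) {n : ℕ} (hn : k ≤ n) :
    (Measure.pi fun _ : Fin n => α) {x | δ < Ustat k n Ψ x}
      ≤ ENNReal.ofReal (Real.exp (-(lam * ((n / k : ℕ) : ℝ) * δ))) *
        (∫⁻ y, ENNReal.ofReal (Real.exp (lam * Ψ y)) ∂(Measure.pi fun _ : Fin k => α)) ^ (n / k) := by
  classical
  set m : ℕ := n / k with hm
  set C : ℝ≥0∞ := ∫⁻ y, ENNReal.ofReal (Real.exp (lam * Ψ y)) ∂(Measure.pi fun _ : Fin k => α)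
    with hC
  have hmk : m * k ≤ n := Nat.div_mul_le_self n k
  -- the blocks
  have hblt : ∀ (j : Fin m) (r : Fin k), j.1 * k + r.1 < n := by
    intro j r
    calc j.1 * k + r.1 < j.1 * k + k := by omega
      _ = (j.1 + 1) * k := by ring
      _ ≤ m * k := Nat.mul_le_mul_right k j.2
      _ ≤ n := hmk
  set blf : Fin m → Fin k → Fin n := fun j r => ⟨j.1 * k + r.1, hblt j r⟩ with hblf
  have hblpair : ∀ (p q : Fin m × Fin k), blf p.1 p.2 = blf q.1 q.2 → p = q := by
    rintro ⟨j₁, r₁⟩ ⟨j₂, r₂⟩ h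
    have hval : j₁.1 * k + r₁.1 = j₂.1 * k + r₂.1 := congrArg Fin.val h
    have hj : j₁.1 = j₂.1 := by
      have e1 : (j₁.1 * k + r₁.1) / k = j₁.1 := by
        rw [mul_comm, Nat.mul_add_div hk, Nat.div_eq_of_lt r₁.2, add_zero]
      have e2 : (j₂.1 * k + r₂.1) / k = j₂.1 := by
        rw [mul_comm, Nat.mul_add_div hk, Nat.div_eq_of_lt r₂.2, add_zero]
      rw [← e1, ← e2, hval]
    have hr : r₁.1 = r₂.1 := by rw [hj] at hval; omega
    simp [Prod.ext_iff, Fin.ext_iff, hj, hr]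
  set e : Fin m → (Fin k ↪ Fin n) := fun j =>
    ⟨blf j, fun r₁ r₂ h => by
      have := hblpair (j, r₁) (j, r₂) h
      simpa [Prod.ext_iff] using this⟩ with he
  have hdesc : 0 < Nat.descFactorial n k := by
    rcases Nat.eq_zero_or_pos (Nat.descFactorial n k) with h | h
    · exact absurd (Nat.descFactorial_eq_zero_iff_lt.1 h) (not_lt.2 hn)
    · exact h
  have hdescR : (0:ℝ) < (Nat.descFactorial n k : ℝ) := by exact_mod_cast hdesc
  have hfacR : (0:ℝ) < (Nat.factorial n : ℝ) := by exact_mod_cast Nat.factorial_pos n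
  -- the averaged representation of the U-statistic
  have hU : ∀ x : Fin n → E,
      ∑ σ : Equiv.Perm (Fin n), ∑ j : Fin m, Ψ (fun r => x (σ (blf j r)))
        = (Nat.factorial n : ℝ) * ((m:ℝ) * Ustat k n Ψ x) := by
    intro x
    apply mul_right_cancel₀ hdescR.ne'
    rw [Finset.sum_comm, Finset.sum_mul]
    have hj : ∀ j : Fin m, (∑ σ : Equiv.Perm (Fin n), Ψ (fun r => x (σ (blf j r))))
        * (Nat.descFactorial n k : ℝ)
        = (Nat.factorial n : ℝ) * ∑ p : Fin k ↪ Fin n, Ψ (fun r => x (p r)) := by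
      intro j
      exact sum_perm_comp (e j) (fun p => Ψ (fun r => x (p r)))
    rw [Finset.sum_congr rfl fun j _ => hj j, Finset.sum_const, Finset.card_univ,
      Fintype.card_fin, nsmul_eq_mul]
    have hsump : ∑ p : Fin k ↪ Fin n, Ψ (fun r => x (p r))
        = Ustat k n Ψ x * (Nat.descFactorial n k : ℝ) := by
      rw [Ustat, div_mul_cancel₀]
      exact hdescR.ne'
    rw [hsump]
    ring
  -- Jensen's inequality pointwise
  have hJ : ∀ x : Fin n → E, Real.exp (lam * (m:ℝ) * Ustat k n Ψ x)
      ≤ ∑ σ : Equiv.Perm (Fin n), (Nat.factorial n : ℝ)⁻¹ *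
          ∏ j : Fin m, Real.exp (lam * Ψ (fun r => x (σ (blf j r)))) := by
    intro x
    have hcard : ∑ _σ : Equiv.Perm (Fin n), (Nat.factorial n : ℝ)⁻¹ = 1 := by
      rw [Finset.sum_const, Finset.card_univ, Fintype.card_perm, Fintype.card_fin,
        nsmul_eq_mul, mul_inv_cancel₀ hfacR.ne']
    have key := convexOn_exp.map_sum_le (t := (Finset.univ : Finset (Equiv.Perm (Fin n))))
      (w := fun _ => (Nat.factorial n : ℝ)⁻¹)
      (p := fun σ => lam * ∑ j : Fin m, Ψ (fun r => x (σ (blf j r))))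
      (fun _ _ => by positivity) hcard (fun _ _ => Set.mem_univ _)
    have harg : ∑ σ : Equiv.Perm (Fin n), (Nat.factorial n : ℝ)⁻¹ •
        (lam * ∑ j : Fin m, Ψ (fun r => x (σ (blf j r)))) = lam * (m:ℝ) * Ustat k n Ψ x := by
      simp only [smul_eq_mul]
      rw [← Finset.mul_sum, ← Finset.mul_sum, hU x]
      field_simp
    rw [harg] at key
    refine key.trans ?_
    apply Finset.sum_le_sum
    intro σ _
    rw [smul_eq_mul]
    apply mul_le_mul_of_nonneg_left _ (by positivity)
    beta_reduce
    rw [Finset.mul_sum, Real.exp_sum]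
  -- Chernoff bound
  set f : (Fin n → E) → ℝ≥0∞ :=
    fun x => ENNReal.ofReal (Real.exp (lam * (m:ℝ) * Ustat k n Ψ x)) with hf
  have hUmeas : Measurable (Ustat k n Ψ) := by
    apply Measurable.div_const
    apply Finset.measurable_sum
    intro p _
    exact hΨmeas.comp (measurable_pi_lambda _ fun j => measurable_pi_apply _)
  have hfmeas : Measurable f := (measurable_const.mul hUmeas).exp.ennreal_ofReal
  set ε : ℝ≥0∞ := ENNReal.ofReal (Real.exp (lam * (m:ℝ) * δ)) with hε
  have hε0 : ε ≠ 0 := (ENNReal.ofReal_pos.2 (Real.exp_pos _)).ne'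
  have hεtop : ε ≠ ⊤ := ENNReal.ofReal_ne_top
  have hsub : {x : Fin n → E | δ < Ustat k n Ψ x} ⊆ {x | ε ≤ f x} := by
    intro x hx
    simp only [Set.mem_setOf_eq] at hx ⊢
    rw [hε, hf]
    apply ENNReal.ofReal_le_ofReal
    apply Real.exp_le_exp.2
    have h0 : (0:ℝ) ≤ lam * (m:ℝ) := by positivity
    exact mul_le_mul_of_nonneg_left hx.le h0
  have hcher : ε * (Measure.pi fun _ : Fin n => α) {x | δ < Ustat k n Ψ x}
      ≤ ∫⁻ x, f x ∂(Measure.pi fun _ : Fin n => α) := by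
    refine le_trans ?_ (mul_meas_ge_le_lintegral₀ hfmeas.aemeasurable ε)
    exact mul_le_mul_right (measure_mono hsub) ε
  -- bound the integral
  have hg : Measurable (fun y => ENNReal.ofReal (Real.exp (lam * Ψ y))) :=
    (measurable_const.mul hΨmeas).exp.ennreal_ofReal
  have hint : ∫⁻ x, f x ∂(Measure.pi fun _ : Fin n => α) ≤ C ^ m := by
    have hpt : ∀ x : Fin n → E, f x ≤ ∑ σ : Equiv.Perm (Fin n),
        ENNReal.ofReal ((Nat.factorial n : ℝ)⁻¹) *
          ∏ j : Fin m, ENNReal.ofReal (Real.exp (lam * Ψ (fun r => x (σ (blf j r))))) := by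
      intro x
      rw [hf]
      calc ENNReal.ofReal (Real.exp (lam * (m:ℝ) * Ustat k n Ψ x))
          ≤ ENNReal.ofReal (∑ σ : Equiv.Perm (Fin n), (Nat.factorial n : ℝ)⁻¹ *
              ∏ j : Fin m, Real.exp (lam * Ψ (fun r => x (σ (blf j r))))) :=
            ENNReal.ofReal_le_ofReal (hJ x)
        _ = ∑ σ : Equiv.Perm (Fin n), ENNReal.ofReal ((Nat.factorial n : ℝ)⁻¹ *
              ∏ j : Fin m, Real.exp (lam * Ψ (fun r => x (σ (blf j r))))) := by
            rw [ENNReal.ofReal_sum_of_nonneg]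
            intro σ _
            positivity
        _ = ∑ σ : Equiv.Perm (Fin n), ENNReal.ofReal ((Nat.factorial n : ℝ)⁻¹) *
              ∏ j : Fin m, ENNReal.ofReal (Real.exp (lam * Ψ (fun r => x (σ (blf j r))))) := by
            refine Finset.sum_congr rfl fun σ _ => ?_
            rw [ENNReal.ofReal_mul (by positivity), ENNReal.ofReal_prod_of_nonneg]
            intro j _
            positivity
    calc ∫⁻ x, f x ∂(Measure.pi fun _ : Fin n => α)
        ≤ ∫⁻ x, (∑ σ : Equiv.Perm (Fin n),
            ENNReal.ofReal ((Nat.factorial n : ℝ)⁻¹) *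
            ∏ j : Fin m, ENNReal.ofReal (Real.exp (lam * Ψ (fun r => x (σ (blf j r))))))
            ∂(Measure.pi fun _ : Fin n => α) := lintegral_mono hpt
      _ = ∑ σ : Equiv.Perm (Fin n), ∫⁻ x,
            ENNReal.ofReal ((Nat.factorial n : ℝ)⁻¹) *
            ∏ j : Fin m, ENNReal.ofReal (Real.exp (lam * Ψ (fun r => x (σ (blf j r)))))
            ∂(Measure.pi fun _ : Fin n => α) := by
          apply lintegral_finset_sum
          intro σ _
          apply Measurable.const_mul
          apply Finset.measurable_prod
          intro j _
          exact hg.comp (measurable_pi_lambda _ fun r => measurable_pi_apply _)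
      _ = ∑ σ : Equiv.Perm (Fin n), ENNReal.ofReal ((Nat.factorial n : ℝ)⁻¹) * C ^ m := by
          refine Finset.sum_congr rfl fun σ _ => ?_
          rw [lintegral_const_mul]
          · congr 1
            exact lintegral_pi_blocks α hg m (fun p => σ (blf p.1 p.2))
              (fun p q h => hblpair p q (σ.injective h))
          · apply Finset.measurable_prod
            intro j _
            exact hg.comp (measurable_pi_lambda _ fun r => measurable_pi_apply _)
      _ = C ^ m := by
          rw [Finset.sum_const, Finset.card_univ, Fintype.card_perm, Fintype.card_fin,
            nsmul_eq_mul, ← mul_assoc]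
          have : (Nat.factorial n : ℝ≥0∞) * ENNReal.ofReal ((Nat.factorial n : ℝ)⁻¹) = 1 := by
            rw [← ENNReal.ofReal_natCast, ← ENNReal.ofReal_mul (by positivity),
              mul_inv_cancel₀ hfacR.ne', ENNReal.ofReal_one]
          rw [this, one_mul]
  -- conclude
  have hεinv : ε⁻¹ = ENNReal.ofReal (Real.exp (-(lam * (m:ℝ) * δ))) := by
    rw [hε, Real.exp_neg, ← ENNReal.ofReal_inv_of_pos (Real.exp_pos _)]
  calc (Measure.pi fun _ : Fin n => α) {x | δ < Ustat k n Ψ x}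
      = ε⁻¹ * (ε * (Measure.pi fun _ : Fin n => α) {x | δ < Ustat k n Ψ x}) := by
        rw [← mul_assoc, ENNReal.inv_mul_cancel hε0 hεtop, one_mul]
    _ ≤ ε⁻¹ * (C ^ m) := by
        apply mul_le_mul_right
        exact hcher.trans hint
    _ = ENNReal.ofReal (Real.exp (-(lam * (m:ℝ) * δ))) * C ^ m := by rw [hεinv]

private lemma ereal_mul_le {c y : ℝ} (hc : 0 < c) {z : EReal} (hz : z ≤ (y : EReal)) :
    (c : EReal) * z ≤ ((c * y : ℝ) : EReal) := by
  induction z using EReal.rec with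
  | bot => rw [EReal.coe_mul_bot_of_pos hc]; exact bot_le
  | coe z =>
    rw [← EReal.coe_mul]
    exact EReal.coe_le_coe_iff.2 (mul_le_mul_of_nonneg_left (EReal.coe_le_coe_iff.1 hz) hc.le)
  | top => exact absurd hz (by simp)

private lemma ustat_sub_abs_le {E : Type*} {k n : ℕ} (Φ₁ Φ₂ : (Fin k → E) → ℝ)
    (x : Fin n → E) :
    |Ustat k n Φ₁ x - Ustat k n Φ₂ x| ≤ Ustat k n (fun y => |Φ₁ y - Φ₂ y|) x := by
  rw [Ustat, Ustat, Ustat, div_sub_div_same, ← Finset.sum_sub_distrib]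
  rcases eq_or_lt_of_le (Nat.cast_nonneg (α := ℝ) (Nat.descFactorial n k)) with h | h
  · rw [← h, div_zero, div_zero, abs_zero]
  · rw [abs_div, abs_of_pos h]
    gcongr
    exact Finset.abs_sum_le_sum_abs _ _

private lemma ustat_measurable {E : Type*} [MeasurableSpace E] {k n : ℕ}
    {Φ : (Fin k → E) → ℝ} (hΦ : Measurable Φ) : Measurable (Ustat k n Φ) := by
  apply Measurable.div_const
  apply Finset.measurable_sum
  intro p _
  exact hΦ.comp (measurable_pi_lambda _ fun j => measurable_pi_apply _)


end UstatApproxAux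

/-- **Exponential approximation of a U-statistic by bounded continuous kernels.**
If `E[exp(λ|W(X_1,…,X_k)|)] < ∞` for every `λ > 0`, there is a sequence `(W_m)` of bounded
continuous kernels with
`lim_m limsup_n (1/n) log P(|U_n(W_m) - U_n(W)| > δ) = -∞` for every `δ > 0`. -/
theorem ustat_exponential_approx
    (d k : ℕ) (hk : 2 ≤ k)
    {Ω : Type*} [MeasurableSpace Ω] (P : Measure Ω) [IsProbabilityMeasure P]
    (α : Measure (EuclideanSpace ℝ (Fin d))) [IsProbabilityMeasure α]
    (X : ℕ → Ω → EuclideanSpace ℝ (Fin d)) (hmeas : ∀ i, Measurable (X i))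
    (hindep : iIndepFun X P)
    (hlaw : ∀ i, Measure.map (X i) P = α)
    (W : (Fin k → EuclideanSpace ℝ (Fin d)) → ℝ) (hWmeas : Measurable W)
    (hWsym : SymKernel k W)
    (hWexp : ∀ lam > (0 : ℝ),
      ∫⁻ ω, ENNReal.ofReal (Real.exp (lam * |W (fun j => X (j : ℕ) ω)|)) ∂P ≠ ⊤) :
    ∃ Wm : ℕ → (Fin k → EuclideanSpace ℝ (Fin d)) → ℝ,
      (∀ m, Continuous (Wm m) ∧ ∃ M : ℝ, ∀ x, |Wm m x| ≤ M) ∧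
      ∀ δ > (0 : ℝ),
        Tendsto (fun m : ℕ => atTop.limsup (fun n : ℕ => (((n : ℝ)⁻¹ : ℝ) : EReal) *
            ENNReal.log (P {ω | δ < |Ustat k n (Wm m) (fun i : Fin n => X (i : ℕ) ω) -
              Ustat k n W (fun i : Fin n => X (i : ℕ) ω)|})))
          atTop (𝓝 (⊥ : EReal)) := by
  classical
  have hk0 : 0 < k := lt_of_lt_of_le two_pos hk
  set β : Measure (Fin k → EuclideanSpace ℝ (Fin d)) := Measure.pi fun _ : Fin k => α with hβ
  -- transfer the exponential moment hypothesis to the product measure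
  have hβexp : ∀ s > (0:ℝ), ∫⁻ y, ENNReal.ofReal (Real.exp (s * |W y|)) ∂β ≠ ⊤ := by
    intro s hs
    have hmap : Measurable (fun ω => fun i : Fin k => X (i : ℕ) ω) :=
      measurable_pi_lambda _ fun i => hmeas _
    have hfmeas : Measurable (fun y : Fin k → EuclideanSpace ℝ (Fin d) =>
        ENNReal.ofReal (Real.exp (s * |W y|))) :=
      (measurable_const.mul hWmeas.abs).exp.ennreal_ofReal
    rw [hβ, ← map_pi P α X hmeas hindep hlaw k, lintegral_map hfmeas hmap]
    exact hWexp s hs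
  -- construct the approximating sequence
  have happrox : ∀ m : ℕ, ∃ V : (Fin k → EuclideanSpace ℝ (Fin d)) → ℝ,
      Continuous V ∧ (∃ M, ∀ x, |V x| ≤ M) ∧
      ∫⁻ y, ENNReal.ofReal (Real.exp (((m:ℝ)+1) * |W y - V y|)) ∂β ≤ 2 := fun m =>
    exists_approx β W hWmeas hβexp ((m:ℝ)+1) (by positivity)
  choose Wm hWmcont hWmbdd hWmint using happrox
  refine ⟨Wm, fun m => ⟨hWmcont m, hWmbdd m⟩, ?_⟩
  intro δ hδ
  rw [EReal.tendsto_nhds_bot_iff_real]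
  intro x
  -- choose the parameter lam
  set lam : ℝ := max ((Real.log 2 + 1)/δ) ((Real.log 2 - 2*k*x)/δ + 1) with hlamdef
  have hlam : 0 < lam := by
    have : 0 < (Real.log 2 + 1)/δ := by
      apply div_pos _ hδ
      have := Real.log_pos (by norm_num : (1:ℝ) < 2)
      linarith
    exact lt_of_lt_of_le this (le_max_left _ _)
  set r : ℝ := lam * δ - Real.log 2 with hr
  have hr1 : 1 ≤ r := by
    have h1 : (Real.log 2 + 1)/δ ≤ lam := le_max_left _ _
    have := (div_le_iff₀ hδ).1 h1
    rw [hr]; linarith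
  have hrx : -r/(2*k) < x := by
    have h2 : (Real.log 2 - 2*k*x)/δ + 1 ≤ lam := le_max_right _ _
    have h3 : (Real.log 2 - 2*k*x)/δ < lam := by linarith
    have h4 : Real.log 2 - 2*k*x < lam * δ := by
      rw [div_lt_iff₀ hδ] at h3; linarith [h3]
    have hk' : (0:ℝ) < 2*k := by positivity
    rw [div_lt_iff₀ hk', hr]
    nlinarith
  obtain ⟨N, hN⟩ : ∃ N : ℕ, lam ≤ (N:ℝ) + 1 := ⟨⌈lam⌉₊, by
    have := Nat.le_ceil lam
    have h2 : (⌈lam⌉₊ : ℝ) ≤ (⌈lam⌉₊ : ℝ) + 1 := by linarith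
    linarith⟩
  filter_upwards [eventually_ge_atTop N] with m hm
  -- fix m; the kernel difference
  set Ψ : (Fin k → EuclideanSpace ℝ (Fin d)) → ℝ := fun y => |Wm m y - W y| with hΨ
  have hΨmeas : Measurable Ψ := (((hWmcont m).measurable).sub hWmeas).abs
  have hΨ0 : ∀ y, 0 ≤ Ψ y := fun y => abs_nonneg _
  have hCm : (∫⁻ y, ENNReal.ofReal (Real.exp (lam * Ψ y)) ∂β) ≤ 2 := by
    have hmono : (∫⁻ y, ENNReal.ofReal (Real.exp (lam * Ψ y)) ∂β)
        ≤ ∫⁻ y, ENNReal.ofReal (Real.exp (((m:ℝ)+1) * |W y - Wm m y|)) ∂β := by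
      apply lintegral_mono
      intro y
      apply ENNReal.ofReal_le_ofReal
      apply Real.exp_le_exp.2
      have hΨy : Ψ y = |W y - Wm m y| := by rw [hΨ]; simp only; rw [abs_sub_comm]
      rw [hΨy]
      apply mul_le_mul_of_nonneg_right _ (abs_nonneg _)
      have h1 : (N:ℝ) ≤ (m:ℝ) := by exact_mod_cast hm
      linarith
    exact hmono.trans (hWmint m)
  -- bound the limsup
  have hlimsup : atTop.limsup (fun n : ℕ => (((n : ℝ)⁻¹ : ℝ) : EReal) *
      ENNReal.log (P {ω | δ < |Ustat k n (Wm m) (fun i : Fin n => X (i : ℕ) ω) -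
        Ustat k n W (fun i : Fin n => X (i : ℕ) ω)|}))
      ≤ ((-r/(2*k) : ℝ) : EReal) := by
    apply Filter.limsup_le_of_le
    · isBoundedDefault
    filter_upwards [eventually_ge_atTop k] with n hnk
    set mn : ℕ := n / k with hmn
    have hn1 : 1 ≤ n := le_trans hk0 hnk
    have hmn1 : 1 ≤ mn := by
      rw [hmn, Nat.one_le_div_iff hk0]
      exact hnk
    have hn2km : (n:ℕ) ≤ 2*k*mn := by
      have h1 : n < (mn + 1) * k := by
        have h2 : n % k < k := Nat.mod_lt _ hk0
        have h0 : k * mn + n % k = n := by rw [hmn]; exact Nat.div_add_mod n k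
        calc n = k * mn + n % k := h0.symm
          _ < k * mn + k := by omega
          _ = (mn + 1) * k := by ring
      have h2 : (mn + 1) * k ≤ 2*k*mn := by
        have : mn * k + k ≤ mn * k + mn * k := by
          apply Nat.add_le_add_left
          exact Nat.le_mul_of_pos_left k hmn1
        calc (mn + 1) * k = mn * k + k := by ring
          _ ≤ mn * k + mn * k := this
          _ = 2*k*mn := by ring
      omega
    -- measurable event
    set A : Set (Fin n → EuclideanSpace ℝ (Fin d)) :=
      {z | δ < |Ustat k n (Wm m) z - Ustat k n W z|} with hA
    have hAmeas : MeasurableSet A := by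
      apply measurableSet_lt measurable_const
      exact ((ustat_measurable (hWmcont m).measurable).sub (ustat_measurable hWmeas)).abs
    have hPA : P {ω | δ < |Ustat k n (Wm m) (fun i : Fin n => X (i : ℕ) ω) -
        Ustat k n W (fun i : Fin n => X (i : ℕ) ω)|}
        = (Measure.pi fun _ : Fin n => α) A := by
      rw [← map_pi P α X hmeas hindep hlaw n,
        Measure.map_apply (measurable_pi_lambda _ fun i => hmeas _) hAmeas]
      rfl
    have hincl : A ⊆ {z | δ < Ustat k n Ψ z} := by
      intro z hz
      simp only [hA, Set.mem_setOf_eq] at hz ⊢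
      exact lt_of_lt_of_le hz (ustat_sub_abs_le _ _ z)
    have hbound : (Measure.pi fun _ : Fin n => α) A
        ≤ ENNReal.ofReal (Real.exp (-(lam * (mn:ℝ) * δ)) * 2 ^ mn) := by
      calc (Measure.pi fun _ : Fin n => α) A
          ≤ (Measure.pi fun _ : Fin n => α) {z | δ < Ustat k n Ψ z} := measure_mono hincl
        _ ≤ ENNReal.ofReal (Real.exp (-(lam * ((n / k : ℕ) : ℝ) * δ))) *
            (∫⁻ y, ENNReal.ofReal (Real.exp (lam * Ψ y)) ∂(Measure.pi fun _ : Fin k => α))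
              ^ (n / k) := prob_bound α hk0 hΨmeas hΨ0 hlam hnk
        _ ≤ ENNReal.ofReal (Real.exp (-(lam * (mn:ℝ) * δ))) * 2 ^ mn := by
            apply mul_le_mul_right
            apply pow_le_pow_left' ?_ _
            rw [← hβ]
            exact hCm
        _ = ENNReal.ofReal (Real.exp (-(lam * (mn:ℝ) * δ)) * 2 ^ mn) := by
            rw [ENNReal.ofReal_mul (by positivity)]
            congr 1
            rw [ENNReal.ofReal_pow (by norm_num : (0:ℝ) ≤ 2)]
            simp
    have hlog : ENNReal.log (P {ω | δ < |Ustat k n (Wm m) (fun i : Fin n => X (i : ℕ) ω) -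
        Ustat k n W (fun i : Fin n => X (i : ℕ) ω)|})
        ≤ ((-(lam * (mn:ℝ) * δ) + mn * Real.log 2 : ℝ) : EReal) := by
      rw [hPA]
      refine le_trans (ENNReal.log_monotone hbound) ?_
      rw [ENNReal.log_ofReal_of_pos (by positivity)]
      apply EReal.coe_le_coe_iff.2
      apply le_of_eq
      rw [Real.log_mul (by positivity) (by positivity), Real.log_exp, Real.log_pow]
    have hnR : (0:ℝ) < (n:ℝ)⁻¹ := by
      apply inv_pos.2
      exact_mod_cast hn1
    refine le_trans (ereal_mul_le hnR hlog) ?_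
    apply EReal.coe_le_coe_iff.2
    have heq : (n:ℝ)⁻¹ * (-(lam * (mn:ℝ) * δ) + mn * Real.log 2) = -((mn:ℝ) * r) / n := by
      rw [hr]
      field_simp
      ring
    rw [heq]
    have hnpos : (0:ℝ) < (n:ℝ) := by exact_mod_cast hn1
    have h2km : (n:ℝ) ≤ 2*k*mn := by exact_mod_cast hn2km
    have h2kpos : (0:ℝ) < 2*(k:ℝ) := by positivity
    rw [div_le_div_iff₀ hnpos h2kpos]
    nlinarith [mul_le_mul_of_nonneg_left h2km (by linarith : (0:ℝ) ≤ r)]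
  exact lt_of_le_of_lt hlimsup (EReal.coe_lt_coe_iff.2 hrx)


end
end

section
/- Let m ≥ 1, let S : ℝ^m → ℝ be C¹ with Z := ∫_{ℝ^m} e^{−S(x)} dx < ∞, and let μ be the probability measure μ(dx) := Z^{−1} e^{−S(x)} dx. Define the operator Hφ := Δφ − ∇S·∇φ. Then for every C² function φ : ℝ^m → (0,∞) and every ψ ∈ C_c^∞(ℝ^m), ∫_{ℝ^m} (−(Hφ)(x)/φ(x)) ψ(x)² μ(dx) ≤ ∫_{ℝ^m} ‖∇ψ(x)‖² μ(dx). -/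
open MeasureTheory ProbabilityTheory Filter Classical
open scoped ENNReal NNReal Topology RealInnerProductSpace

noncomputable section

open Set in
private theorem div_integral_zero_pi (n : ℕ)
    (f : Fin (n + 1) → (Fin (n + 1) → ℝ) → ℝ)
    (f' : Fin (n + 1) → (Fin (n + 1) → ℝ) → ((Fin (n + 1) → ℝ) →L[ℝ] ℝ))
    (hc : ∀ i, Continuous (f i)) (hsupp : ∀ i, HasCompactSupport (f i))
    (hd : ∀ x i, HasFDerivAt (f i) (f' i x) x)
    (hdiv : Continuous fun x => ∑ i, f' i x (Pi.single i 1)) :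
    ∫ x, ∑ i, f' i x (Pi.single i 1) = 0 := by
  set K : Set (Fin (n + 1) → ℝ) := ⋃ i, tsupport (f i) with hK
  have hKc : IsCompact K := isCompact_iUnion fun i => hsupp i
  obtain ⟨R, hR0, hRK⟩ : ∃ R > 0, K ⊆ Metric.ball 0 R := by
    rcases hKc.isBounded.subset_ball_lt 0 0 with ⟨R, hR0, hsub⟩
    exact ⟨R, hR0, hsub⟩
  -- off K, each f i vanishes near x, so f' i x = 0
  have hf'zero : ∀ x ∉ K, ∀ i, f' i x = 0 := by
    intro x hx i
    have hxi : x ∉ tsupport (f i) := fun h => hx (Set.mem_iUnion.2 ⟨i, h⟩)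
    have h0 : f i =ᶠ[nhds x] fun _ => (0 : ℝ) :=
      (notMem_tsupport_iff_eventuallyEq.1 hxi)
    have : HasFDerivAt (f i) (0 : (Fin (n+1) → ℝ) →L[ℝ] ℝ) x :=
      (hasFDerivAt_const (0:ℝ) x).congr_of_eventuallyEq h0
    exact ((hd x i).unique this)
  have hdivsupp : HasCompactSupport fun x => ∑ i, f' i x (Pi.single i 1) := by
    apply HasCompactSupport.of_support_subset_isCompact hKc
    intro x hx
    by_contra hxK
    exact hx (by simp [hf'zero x hxK])
  set a : Fin (n + 1) → ℝ := fun _ => -R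
  set b : Fin (n + 1) → ℝ := fun _ => R
  have hle : a ≤ b := fun i => by simp [a, b]; linarith
  have hKicc : K ⊆ Icc a b := by
    intro x hx
    have := hRK hx
    simp only [Metric.mem_ball, dist_zero_right] at this
    constructor <;> intro i <;>
      have hxi : |x i| ≤ ‖x‖ := by
        simpa using norm_le_pi_norm x i
    · simp only [a]; cases abs_le.1 (hxi.trans this.le) with
      | intro h1 h2 => exact h1
    · simp only [b]; cases abs_le.1 (hxi.trans this.le) with
      | intro h1 h2 => exact h2
  have hInt : Integrable fun x => ∑ i, f' i x (Pi.single i 1) :=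
    hdiv.integrable_of_hasCompactSupport hdivsupp
  have hset : ∫ x, ∑ i, f' i x (Pi.single i 1)
      = ∫ x in Icc a b, ∑ i, f' i x (Pi.single i 1) := by
    refine (setIntegral_eq_integral_of_forall_compl_eq_zero ?_).symm
    intro x hx
    have hxK : x ∉ K := fun h => hx (hKicc h)
    simp [hf'zero x hxK]
  have hfaces := integral_divergence_of_hasFDerivAt_off_countable' a b hle f f' ∅
    Set.countable_empty (fun i => (hc i).continuousOn)
    (fun x _ i => hd x i) hInt.integrableOn
  rw [hset, hfaces]
  apply Finset.sum_eq_zero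
  intro i _
  have hzero : ∀ (c : ℝ), |c| = R → ∀ y : Fin n → ℝ,
      f i (i.insertNth c y : Fin (n+1) → ℝ) = 0 := by
    intro c hc' y
    set z : Fin (n+1) → ℝ := i.insertNth c y with hz
    apply image_eq_zero_of_notMem_tsupport
    intro hmem
    have hin : z ∈ K := Set.mem_iUnion.2 ⟨i, hmem⟩
    have := hRK hin
    simp only [Metric.mem_ball, dist_zero_right] at this
    have hxi : |z i| ≤ ‖z‖ := by
      simpa using norm_le_pi_norm z i
    rw [hz, Fin.insertNth_apply_same, hc'] at hxi
    linarith
  have h1 : ∀ y : Fin n → ℝ, f i (i.insertNth (b i) y) = 0 :=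
    hzero R (by rw [abs_of_pos hR0]) 
  have h2 : ∀ y : Fin n → ℝ, f i (i.insertNth (a i) y) = 0 :=
    hzero (-R) (by rw [abs_neg, abs_of_pos hR0])
  simp [h1, h2]

open Set in
private theorem div_integral_zero_E (n : ℕ)
    (F : Fin (n + 1) → EuclideanSpace ℝ (Fin (n + 1)) → ℝ)
    (F' : Fin (n + 1) → EuclideanSpace ℝ (Fin (n + 1)) →
      (EuclideanSpace ℝ (Fin (n + 1)) →L[ℝ] ℝ))
    (hc : ∀ i, Continuous (F i)) (hsupp : ∀ i, HasCompactSupport (F i))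
    (hd : ∀ x i, HasFDerivAt (F i) (F' i x) x)
    (hdiv : Continuous fun x => ∑ i, F' i x (EuclideanSpace.single i 1)) :
    ∫ x, ∑ i, F' i x (EuclideanSpace.single i 1) = 0 := by
  set eL : EuclideanSpace ℝ (Fin (n + 1)) ≃L[ℝ] (Fin (n + 1) → ℝ) :=
    EuclideanSpace.equiv (Fin (n + 1)) ℝ with heL
  have hsingle : ∀ i : Fin (n + 1),
      eL.symm (Pi.single i 1) = EuclideanSpace.single i 1 := fun i => rfl
  have key : ∫ x, ∑ i, (F' i (eL.symm x)).comp
      (eL.symm : (Fin (n+1) → ℝ) →L[ℝ] EuclideanSpace ℝ (Fin (n+1))) (Pi.single i 1) = 0 := by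
    apply div_integral_zero_pi n (fun i x => F i (eL.symm x))
    · exact fun i => (hc i).comp eL.symm.continuous
    · intro i
      exact (hsupp i).comp_homeomorph eL.symm.toHomeomorph
    · intro x i
      exact (hd (eL.symm x) i).comp x eL.symm.hasFDerivAt
    · have h2 : Continuous fun x => ∑ i, F' i (eL.symm x) (EuclideanSpace.single i 1) :=
        hdiv.comp eL.symm.continuous
      simp only [ContinuousLinearMap.comp_apply, ContinuousLinearEquiv.coe_coe]
      simpa [hsingle] using h2
  have hmp := (EuclideanSpace.volume_preserving_symm_measurableEquiv_toLp (Fin (n + 1))).symm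
  have := hmp.integral_comp (MeasurableEquiv.measurableEmbedding _)
    (fun x => ∑ i, F' i x (EuclideanSpace.single i 1))
  rw [← this]
  rw [← key]
  congr 1

section aux
variable {n : ℕ}

private theorem grad_inner_eq (f : EuclideanSpace ℝ (Fin (n+1)) → ℝ) (x v : EuclideanSpace ℝ (Fin (n+1))) :
    ⟪gradient f x, v⟫ = fderiv ℝ f x v :=
  InnerProductSpace.toDual_symm_apply

private theorem grad_coord (f : EuclideanSpace ℝ (Fin (n+1)) → ℝ) (x : EuclideanSpace ℝ (Fin (n+1)))
    (i : Fin (n+1)) : gradient f x i = fderiv ℝ f x (EuclideanSpace.single i 1) := by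
  rw [← grad_inner_eq f x (EuclideanSpace.single i 1)]
  rw [EuclideanSpace.inner_single_right]; simp

private theorem grad_inner_sum (f g : EuclideanSpace ℝ (Fin (n+1)) → ℝ) (x : EuclideanSpace ℝ (Fin (n+1))) :
    ⟪gradient f x, gradient g x⟫
      = ∑ i, fderiv ℝ f x (EuclideanSpace.single i 1) * fderiv ℝ g x (EuclideanSpace.single i 1) := by
  rw [PiLp.inner_apply]
  refine Finset.sum_congr rfl fun i _ => ?_
  simp [grad_coord, mul_comm]

private theorem grad_norm_sq (f : EuclideanSpace ℝ (Fin (n+1)) → ℝ) (x : EuclideanSpace ℝ (Fin (n+1))) :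
    ‖gradient f x‖ ^ 2 = ∑ i, fderiv ℝ f x (EuclideanSpace.single i 1) ^ 2 := by
  rw [← real_inner_self_eq_norm_sq, grad_inner_sum]
  exact Finset.sum_congr rfl fun i _ => (sq _).symm

end aux

set_option maxHeartbeats 1000000 in
/-- **A Lyapunov-type lemma.** Let `μ = Z⁻¹ e^{-S} dx` be a Gibbs probability measure on
`ℝ^m` and `H φ := Δφ - ∇S·∇φ`. Then for every positive `C²` function `φ` and every smooth
compactly supported `ψ`, `∫ (-(Hφ)/φ) ψ² dμ ≤ ∫ ‖∇ψ‖² dμ`. -/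
theorem lyapunov_key_lemma
    (m : ℕ) (hm : 1 ≤ m)
    (S : EuclideanSpace ℝ (Fin m) → ℝ) (hS : ContDiff ℝ 1 S)
    (hZ : Integrable (fun x => Real.exp (-S x)) (volume : Measure (EuclideanSpace ℝ (Fin m))))
    (μ : Measure (EuclideanSpace ℝ (Fin m)))
    (hμ : μ = (volume : Measure (EuclideanSpace ℝ (Fin m))).withDensity
      (fun x => ENNReal.ofReal ((∫ y, Real.exp (-S y))⁻¹ * Real.exp (-S x))))
    (φ : EuclideanSpace ℝ (Fin m) → ℝ) (hφ : ContDiff ℝ 2 φ) (hφpos : ∀ x, 0 < φ x)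
    (ψ : EuclideanSpace ℝ (Fin m) → ℝ) (hψ : ContDiff ℝ (⊤ : ℕ∞) ψ) (hψc : HasCompactSupport ψ) :
    ∫ x, (-(lap φ x - ⟪gradient S x, gradient φ x⟫) / φ x) * ψ x ^ 2 ∂μ
      ≤ ∫ x, ‖gradient ψ x‖ ^ 2 ∂μ := by
  obtain ⟨n, rfl⟩ : ∃ n, m = n + 1 := ⟨m - 1, by omega⟩
  -- basic differentiability
  have hSd : Differentiable ℝ S := hS.differentiable one_ne_zero
  have hφd : Differentiable ℝ φ := hφ.differentiable two_ne_zero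
  have hψd : Differentiable ℝ ψ := hψ.differentiable (by simp)
  have hφ1 : ContDiff ℝ 1 (fderiv ℝ φ) := hφ.fderiv_right (by norm_num)
  have hφ1d : Differentiable ℝ (fderiv ℝ φ) := hφ1.differentiable one_ne_zero
  have hφ2c : Continuous (fderiv ℝ (fderiv ℝ φ)) := (hφ1.fderiv_right (m := 0) (by norm_num)).continuous
  have hφc' : Continuous (fderiv ℝ φ) := hφ1.continuous
  have hψc' : Continuous (fderiv ℝ ψ) := (hψ.fderiv_right (m := 0) (by simp)).continuous
  have hSc' : Continuous (fderiv ℝ S) := (hS.fderiv_right (m := 0) (by norm_num)).continuous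
  have hφne : ∀ x, φ x ≠ 0 := fun x => (hφpos x).ne'
  set ρ : EuclideanSpace ℝ (Fin (n+1)) → ℝ := fun x => Real.exp (-S x) with hρdef
  have hρc : Continuous ρ := Real.continuous_exp.comp hS.continuous.neg
  have hρpos : ∀ x, 0 < ρ x := fun x => Real.exp_pos _
  -- the function u = ρ ψ² / φ and its derivative
  set u : EuclideanSpace ℝ (Fin (n+1)) → ℝ := fun x => ρ x * ψ x ^ 2 * (φ x)⁻¹ with hudef
  set DU : EuclideanSpace ℝ (Fin (n+1)) → EuclideanSpace ℝ (Fin (n+1)) →L[ℝ] ℝ := fun x =>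
    (-(u x)) • fderiv ℝ S x + (2 * ρ x * ψ x * (φ x)⁻¹) • fderiv ℝ ψ x
      + (-(ρ x * ψ x ^ 2 * ((φ x) ^ 2)⁻¹)) • fderiv ℝ φ x with hDUdef
  have hu : ∀ x, HasFDerivAt u (DU x) x := by
    intro x
    have h1 : HasFDerivAt ρ (Real.exp (-S x) • -(fderiv ℝ S x)) x :=
      ((hSd x).hasFDerivAt.neg).exp
    have heq : (fun y : EuclideanSpace ℝ (Fin (n+1)) => ψ y ^ 2) = fun y => ψ y * ψ y := by funext y; ring
    have h2 : HasFDerivAt (fun y : EuclideanSpace ℝ (Fin (n+1)) => ψ y ^ 2)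
        (ψ x • fderiv ℝ ψ x + ψ x • fderiv ℝ ψ x) x := by
      rw [heq]; exact (hψd x).hasFDerivAt.mul (hψd x).hasFDerivAt
    have h3 : HasFDerivAt (fun y : EuclideanSpace ℝ (Fin (n+1)) => (φ y)⁻¹)
        ((ContinuousLinearMap.smulRight (1 : ℝ →L[ℝ] ℝ) (-(φ x ^ 2)⁻¹)).comp
          (fderiv ℝ φ x)) x :=
      (hasFDerivAt_inv (hφne x)).comp x (hφd x).hasFDerivAt
    have h123 := (h1.mul h2).mul h3
    refine h123.congr_fderiv ?_
    ext w
    simp only [hDUdef, ContinuousLinearMap.add_apply, ContinuousLinearMap.smul_apply,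
      ContinuousLinearMap.coe_comp', Function.comp_apply,
      ContinuousLinearMap.smulRight_apply, ContinuousLinearMap.one_apply,
      ContinuousLinearMap.neg_apply, smul_eq_mul, hudef, hρdef, Pi.mul_apply]
    ring
  have hDUapp : ∀ x v, DU x v = -(u x) * fderiv ℝ S x v
      + (2 * ρ x * ψ x * (φ x)⁻¹) * fderiv ℝ ψ x v
      + (-(ρ x * ψ x ^ 2 * ((φ x) ^ 2)⁻¹)) * fderiv ℝ φ x v := by
    intro x v
    simp [hDUdef, ContinuousLinearMap.add_apply, ContinuousLinearMap.smul_apply, smul_eq_mul]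
  -- derivative of the partial-derivative functions
  have hW : ∀ (i : Fin (n+1)) x, HasFDerivAt
      (fun y => fderiv ℝ φ y (EuclideanSpace.single i 1))
      ((fderiv ℝ (fderiv ℝ φ) x).flip (EuclideanSpace.single i 1)) x := by
    intro i x
    have h := (hφ1d x).hasFDerivAt.clm_apply
      (hasFDerivAt_const (EuclideanSpace.single i 1 : EuclideanSpace ℝ (Fin (n+1))) x)
    simpa using h
  set F : Fin (n+1) → EuclideanSpace ℝ (Fin (n+1)) → ℝ :=
    fun i x => u x * fderiv ℝ φ x (EuclideanSpace.single i 1) with hFdef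
  set F' : Fin (n+1) → EuclideanSpace ℝ (Fin (n+1)) → EuclideanSpace ℝ (Fin (n+1)) →L[ℝ] ℝ :=
    fun i x => u x • (fderiv ℝ (fderiv ℝ φ) x).flip (EuclideanSpace.single i 1)
      + fderiv ℝ φ x (EuclideanSpace.single i 1) • DU x with hF'def
  have hF : ∀ x (i : Fin (n+1)), HasFDerivAt (F i) (F' i x) x := fun x i => (hu x).mul (hW i x)
  set dvg : EuclideanSpace ℝ (Fin (n+1)) → ℝ :=
    fun x => ∑ i, F' i x (EuclideanSpace.single i 1) with hdvgdef
  have hdvg_eq : ∀ x, dvg x = u x * lap φ x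
      + ∑ i, fderiv ℝ φ x (EuclideanSpace.single i 1) * DU x (EuclideanSpace.single i 1) := by
    intro x
    simp [hdvgdef, hF'def, ContinuousLinearMap.add_apply, ContinuousLinearMap.smul_apply,
      smul_eq_mul, ContinuousLinearMap.flip_apply, lap, Finset.sum_add_distrib, Finset.mul_sum]
  -- continuity facts
  have happ : ∀ {g : EuclideanSpace ℝ (Fin (n+1)) → EuclideanSpace ℝ (Fin (n+1)) →L[ℝ] ℝ},
      Continuous g → ∀ v, Continuous fun x => g x v :=
    fun hg v => hg.clm_apply continuous_const
  have hψcc : Continuous ψ := hψ.continuous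
  have hφcc : Continuous φ := hφ.continuous
  have hφinv : Continuous fun x => (φ x)⁻¹ := hφcc.inv₀ hφne
  have huc : Continuous u := (hρc.mul (hψcc.pow 2)).mul hφinv
  have hDUc : ∀ v, Continuous fun x => DU x v := by
    intro v
    simp only [hDUapp]
    exact ((huc.neg.mul (happ hSc' v)).add
        ((((continuous_const.mul hρc).mul hψcc).mul hφinv).mul (happ hψc' v))).add
      ((((hρc.mul (hψcc.pow 2)).mul
        ((hφcc.pow 2).inv₀ fun x => pow_ne_zero 2 (hφne x))).neg).mul (happ hφc' v))
  have hlapc : Continuous (lap φ) := by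
    have : lap φ = fun x => ∑ i, fderiv ℝ (fderiv ℝ φ) x (EuclideanSpace.single i 1)
        (EuclideanSpace.single i 1) := rfl
    rw [this]
    exact continuous_finset_sum _ fun i _ =>
      (hφ2c.clm_apply continuous_const).clm_apply continuous_const
  have hdvgc : Continuous dvg := by
    have h1 : dvg = fun x => u x * lap φ x + ∑ i, fderiv ℝ φ x (EuclideanSpace.single i 1)
        * DU x (EuclideanSpace.single i 1) := funext hdvg_eq
    rw [h1]
    exact (huc.mul hlapc).add
      (continuous_finset_sum _ fun i _ => (happ hφc' _).mul (hDUc _))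
  -- support facts
  have hψ0 : ∀ x, x ∉ tsupport ψ → ψ x = 0 := fun x hx => image_eq_zero_of_notMem_tsupport hx
  have hfψ0 : ∀ x, x ∉ tsupport ψ → fderiv ℝ ψ x = 0 := by
    intro x hx
    have h0 : ψ =ᶠ[nhds x] fun _ => (0:ℝ) := notMem_tsupport_iff_eventuallyEq.1 hx
    rw [h0.fderiv_eq]
    exact fderiv_const_apply 0
  have hu0 : ∀ x, ψ x = 0 → u x = 0 := by
    intro x h; simp [hudef, h]
  have hFsupp : ∀ i, HasCompactSupport (F i) := by
    intro i
    apply HasCompactSupport.of_support_subset_isCompact hψc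
    intro x hx
    by_contra hxt
    apply hx
    simp [hFdef, hu0 x (hψ0 x hxt)]
  have hFc : ∀ i, Continuous (F i) := fun i => huc.mul (happ hφc' _)
  have hdvg0 : ∀ x, x ∉ tsupport ψ → dvg x = 0 := by
    intro x hx
    have hψx := hψ0 x hx
    rw [hdvg_eq]
    simp [hDUapp, hu0 x hψx, hψx, hudef]
  have hdiv0 : ∫ x, dvg x = 0 := div_integral_zero_E n F F' hFc hFsupp hF hdvgc
  have hdvg_supp : HasCompactSupport dvg :=
    HasCompactSupport.of_support_subset_isCompact hψc fun x hx => by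
      by_contra hxt; exact hx (hdvg0 x hxt)
  have hdvgInt : Integrable dvg := hdvgc.integrable_of_hasCompactSupport hdvg_supp
  -- the quadratic form bound
  set Q : EuclideanSpace ℝ (Fin (n+1)) → ℝ := fun x => ∑ i,
    (2 * (ψ x * (φ x)⁻¹) * (fderiv ℝ φ x (EuclideanSpace.single i 1)
        * fderiv ℝ ψ x (EuclideanSpace.single i 1))
      - (ψ x * (φ x)⁻¹)^2 * fderiv ℝ φ x (EuclideanSpace.single i 1) ^ 2) with hQdef
  set G : EuclideanSpace ℝ (Fin (n+1)) → ℝ :=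
    fun x => ∑ i, fderiv ℝ ψ x (EuclideanSpace.single i 1) ^ 2 with hGdef
  have hsum : ∀ x, ∑ i, fderiv ℝ φ x (EuclideanSpace.single i 1)
        * DU x (EuclideanSpace.single i 1)
      = -(u x) * (∑ i, fderiv ℝ S x (EuclideanSpace.single i 1)
          * fderiv ℝ φ x (EuclideanSpace.single i 1)) + ρ x * Q x := by
    intro x
    rw [hQdef, Finset.mul_sum, Finset.mul_sum, ← Finset.sum_add_distrib]
    refine Finset.sum_congr rfl fun i _ => ?_
    rw [hDUapp]
    simp only [hudef]
    have hφx := hφne x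
    field_simp
    ring
  have hkey : ∀ x, ρ x * ((-(lap φ x - ⟪gradient S x, gradient φ x⟫) / φ x) * ψ x ^ 2)
      = ρ x * Q x - dvg x := by
    intro x
    rw [hdvg_eq x, hsum x, grad_inner_sum]
    have hφx := hφne x
    simp only [hudef]
    field_simp
    ring
  have hQG : ∀ x, ρ x * Q x ≤ ρ x * G x := by
    intro x
    apply mul_le_mul_of_nonneg_left _ (hρpos x).le
    apply Finset.sum_le_sum
    intro i _
    nlinarith [sq_nonneg (fderiv ℝ ψ x (EuclideanSpace.single i 1)
      - (ψ x * (φ x)⁻¹) * fderiv ℝ φ x (EuclideanSpace.single i 1))]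
  -- integrability
  have hQc : Continuous Q := continuous_finset_sum _ fun i _ =>
    ((continuous_const.mul (hψcc.mul hφinv)).mul ((happ hφc' _).mul (happ hψc' _))).sub
      (((hψcc.mul hφinv).pow 2).mul ((happ hφc' _).pow 2))
  have hGc : Continuous G := continuous_finset_sum _ fun i _ => (happ hψc' _).pow 2
  have hIQ : Integrable (fun x => ρ x * Q x) := by
    apply (hρc.mul hQc).integrable_of_hasCompactSupport
    apply HasCompactSupport.of_support_subset_isCompact hψc
    intro x hx
    by_contra hxt
    apply hx
    simp [hQdef, hψ0 x hxt]
  have hIG : Integrable (fun x => ρ x * G x) := by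
    apply (hρc.mul hGc).integrable_of_hasCompactSupport
    apply HasCompactSupport.of_support_subset_isCompact hψc
    intro x hx
    by_contra hxt
    apply hx
    simp [hGdef, hfψ0 x hxt]
  have hGnorm : ∀ x, ‖gradient ψ x‖ ^ 2 = G x := fun x => grad_norm_sq ψ x
  have hcore : ∫ x, ρ x * ((-(lap φ x - ⟪gradient S x, gradient φ x⟫) / φ x) * ψ x ^ 2)
      ≤ ∫ x, ρ x * ‖gradient ψ x‖ ^ 2 := by
    calc ∫ x, ρ x * ((-(lap φ x - ⟪gradient S x, gradient φ x⟫) / φ x) * ψ x ^ 2)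
        = ∫ x, (ρ x * Q x - dvg x) := by
          congr 1; funext x; exact hkey x
      _ = (∫ x, ρ x * Q x) - ∫ x, dvg x := integral_sub hIQ hdvgInt
      _ = ∫ x, ρ x * Q x := by rw [hdiv0, sub_zero]
      _ ≤ ∫ x, ρ x * G x := integral_mono hIQ hIG hQG
      _ = ∫ x, ρ x * ‖gradient ψ x‖ ^ 2 := by
          congr 1; funext x; rw [hGnorm]
  -- convert the μ-integrals to weighted Lebesgue integrals
  have hZnn : (0:ℝ) ≤ (∫ y, Real.exp (-S y))⁻¹ :=
    inv_nonneg.mpr (integral_nonneg fun y => (Real.exp_pos _).le)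
  have hmeas : Measurable fun x => ((∫ y, Real.exp (-S y))⁻¹ * ρ x).toNNReal :=
    ((continuous_const.mul hρc).measurable).real_toNNReal
  have hconv : ∀ f : EuclideanSpace ℝ (Fin (n+1)) → ℝ,
      ∫ x, f x ∂μ = ∫ x, ((∫ y, Real.exp (-S y))⁻¹ * ρ x) * f x := by
    intro f
    rw [hμ]
    rw [show (fun x => ENNReal.ofReal ((∫ y, Real.exp (-S y))⁻¹ * Real.exp (-S x)))
        = (fun x => (((fun x => ((∫ y, Real.exp (-S y))⁻¹ * ρ x).toNNReal) x : ℝ≥0) : ℝ≥0∞))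
        from rfl]
    rw [integral_withDensity_eq_integral_smul hmeas f]
    congr 1; funext x
    rw [NNReal.smul_def, Real.coe_toNNReal _ (mul_nonneg hZnn (hρpos x).le), smul_eq_mul]
  rw [hconv, hconv]
  simp_rw [mul_assoc]
  rw [integral_const_mul, integral_const_mul]
  exact mul_le_mul_of_nonneg_left hcore hZnn


end
end

section
/- Let V : ℝ^d → ℝ be C² and let K₁, K₂ ≥ 0 be such that ‖∇²V(x)‖_op ≤ K₁‖∇V(x)‖ + K₂ for all x ∈ ℝ^d, where ‖·‖_op is the operator norm. Then for every x ∈ ℝ^d, ‖∇²V(x)‖_op² ≤ 5K₁²((4/5)‖∇V(x)‖² − ΔV(x)) + 4K₂² + (25 K₁⁴ d²)/4. -/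
open MeasureTheory ProbabilityTheory Filter Classical
open scoped ENNReal NNReal Topology RealInnerProductSpace

noncomputable section

/-- **A pointwise Hessian bound.** If `V` is `C²` with
`‖∇²V(x)‖_op ≤ K₁‖∇V(x)‖ + K₂`, then
`‖∇²V(x)‖_op² ≤ 5K₁²((4/5)‖∇V(x)‖² − ΔV(x)) + 4K₂² + 25K₁⁴d²/4`. -/
theorem hessian_pointwise_bound
    (d : ℕ) (V : EuclideanSpace ℝ (Fin d) → ℝ) (hV : ContDiff ℝ 2 V)
    (K₁ K₂ : ℝ) (hK₁ : 0 ≤ K₁) (hK₂ : 0 ≤ K₂)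
    (hbound : ∀ x, ‖fderiv ℝ (fderiv ℝ V) x‖ ≤ K₁ * ‖gradient V x‖ + K₂) :
    ∀ x, ‖fderiv ℝ (fderiv ℝ V) x‖ ^ 2
      ≤ 5 * K₁ ^ 2 * ((4 / 5) * ‖gradient V x‖ ^ 2 - lap V x)
        + 4 * K₂ ^ 2 + 25 * K₁ ^ 4 * (d : ℝ) ^ 2 / 4 := by
  intro x
  set A := fderiv ℝ (fderiv ℝ V) x with hA
  have hterm : ∀ i : Fin d,
      |A (EuclideanSpace.single i 1) (EuclideanSpace.single i 1)| ≤ ‖A‖ := by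
    intro i
    have h1 : ‖(EuclideanSpace.single i (1:ℝ) : EuclideanSpace ℝ (Fin d))‖ = 1 := by
      simp [EuclideanSpace.norm_single]
    calc |A (EuclideanSpace.single i 1) (EuclideanSpace.single i 1)|
        ≤ ‖A (EuclideanSpace.single i 1)‖ *
            ‖(EuclideanSpace.single i (1:ℝ) : EuclideanSpace ℝ (Fin d))‖ :=
          (A (EuclideanSpace.single i 1)).le_opNorm _
      _ ≤ (‖A‖ * ‖(EuclideanSpace.single i (1:ℝ) : EuclideanSpace ℝ (Fin d))‖) *
            ‖(EuclideanSpace.single i (1:ℝ) : EuclideanSpace ℝ (Fin d))‖ := by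
          gcongr
          exact A.le_opNorm _
      _ = ‖A‖ := by rw [h1]; ring
  have hlap : |lap V x| ≤ (d : ℝ) * ‖A‖ := by
    calc |lap V x| ≤ ∑ i : Fin d,
          |A (EuclideanSpace.single i 1) (EuclideanSpace.single i 1)| :=
        Finset.abs_sum_le_sum_abs _ _
      _ ≤ ∑ _i : Fin d, ‖A‖ := Finset.sum_le_sum fun i _ => hterm i
      _ = (d : ℝ) * ‖A‖ := by simp [mul_comm]
  have hb := hbound x
  have hAn : 0 ≤ ‖A‖ := ContinuousLinearMap.opNorm_nonneg _
  have hgn : 0 ≤ ‖gradient V x‖ := norm_nonneg _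
  have hd : (0:ℝ) ≤ d := Nat.cast_nonneg d
  have habs := abs_le.mp hlap
  nlinarith [sq_nonneg (‖A‖ - 5 * K₁ ^ 2 * d / 2), sq_nonneg (K₁ * ‖gradient V x‖ - K₂),
    mul_nonneg (mul_nonneg hK₁ hK₁) hd, sq_nonneg K₁, sq_nonneg (K₁ * ‖gradient V x‖ + K₂)]

end
end
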